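/- arXiv:1008.2244 — 10 statements merged into one kernel-verified Lean document; each statement's English description precedes it below -/
import Mathlib

section
/- Let I ⊆ S be a finite set and let f_s ∈ C(X) for s ∈ I, with f_{s_0} ≠ 0 for some s_0 ∈ I. Then there exist x ∈ X and a character γ of S such that the bounded operator ∑_{s ∈ I} π_{x,γ}(S_s) π_{x,γ}(f_s) on ℓ²(S) is nonzero. In particular, the family of representations {π_{x,γ}} separates the elements of the algebra of finite sums ∑_s S_s f_s. -/
/-- the left regular representations separate the elements of the algebra
of finite sums `∑ S_s f_s`. -/
theorem left_regular_separates
    {S : Type} [AddCancelCommMonoid S] [Countable S] [DecidableEq S]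
    {X : Type} [MetricSpace X] [CompactSpace X] [Nonempty X]
    (σ : S → C(X, X))
    (hσ0 : σ 0 = ContinuousMap.id X)
    (hσadd : ∀ s t : S, σ (s + t) = (σ s).comp (σ t))
    (hσsurj : ∀ s : S, Function.Surjective (σ s))
    -- the family of left regular representations, given by their defining actions
    (πf : X → (S → ℂ) → C(X, ℂ) → (lp (fun _ : S => ℂ) 2 →L[ℂ] lp (fun _ : S => ℂ) 2))
    (πS : X → (S → ℂ) → S → (lp (fun _ : S => ℂ) 2 →L[ℂ] lp (fun _ : S => ℂ) 2))
    (hπf : ∀ (x : X) (γ : S → ℂ) (f : C(X, ℂ)) (η : lp (fun _ : S => ℂ) 2) (s : S),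
      (πf x γ f η) s = f ((σ s) x) * η s)
    (hπS : ∀ (x : X) (γ : S → ℂ) (t : S) (η : lp (fun _ : S => ℂ) 2) (s' : S),
      (πS x γ t η) (t + s') = γ t * η s')
    (hπS0 : ∀ (x : X) (γ : S → ℂ) (t : S) (η : lp (fun _ : S => ℂ) 2) (s : S),
      (¬ ∃ s' : S, s = t + s') → (πS x γ t η) s = 0)
    -- a finite set of coefficients, not all zero
    (I : Finset S) (f : S → C(X, ℂ)) (s₀ : S) (hs₀ : s₀ ∈ I) (hf : f s₀ ≠ 0) :
    ∃ (x : X) (γ : S → ℂ),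
      (γ 0 = 1 ∧ (∀ s t : S, γ (s + t) = γ s * γ t) ∧ (∀ s : S, ‖γ s‖ = 1)) ∧
      (∑ s ∈ I, (πS x γ s).comp (πf x γ (f s))) ≠ 0 := by
  -- choose a point where f s₀ is nonzero
  obtain ⟨x, hx⟩ : ∃ x : X, f s₀ x ≠ 0 := by
    by_contra h
    push_neg at h
    exact hf (ContinuousMap.ext fun x => h x)
  refine ⟨x, fun _ => 1, ⟨rfl, fun _ _ => (one_mul 1).symm, fun _ => norm_one⟩, ?_⟩
  set γ : S → ℂ := fun _ => (1 : ℂ) with hγ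
  -- the delta function at 0
  set η : lp (fun _ : S => ℂ) 2 := lp.single 2 (0 : S) (1 : ℂ) with hη
  have hηval : ∀ u : S, η u = if u = 0 then 1 else 0 := by
    intro u
    rw [hη, lp.single_apply]
    by_cases h : u = 0 <;> simp [h]
  -- applying πf gives a scalar multiple of the delta at 0
  have h1 : ∀ s : S, ∀ u : S, (πf x γ (f s) η) u = if u = 0 then f s x else 0 := by
    intro s u
    rw [hπf, hηval]
    by_cases h : u = 0
    · simp [h, hσ0]
    · simp [h]
  -- applying πS gives a scalar multiple of the delta at s
  have h2 : ∀ s : S, ∀ u : S, (πS x γ s (πf x γ (f s) η)) u = if u = s then f s x else 0 := by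
    intro s u
    by_cases h : ∃ s' : S, u = s + s'
    · obtain ⟨s', rfl⟩ := h
      rw [hπS, h1]
      by_cases h' : s' = 0
      · simp [h', hγ]
      · have : ¬ (s + s' = s) := by
          intro hcontra
          exact h' (by
            have := hcontra.trans (add_zero s).symm
            exact add_left_cancel this)
        simp [h', this, hγ]
    · rw [hπS0 x γ s _ u h]
      have : u ≠ s := by
        intro hcontra
        exact h ⟨0, by rw [hcontra, add_zero]⟩
      simp [this]
  intro hzero
  have := congrArg (fun T => (T η : lp (fun _ : S => ℂ) 2) s₀) hzero
  simp only [ContinuousLinearMap.zero_apply, lp.coeFn_zero, Pi.zero_apply] at this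
  rw [ContinuousLinearMap.sum_apply, lp.coeFn_sum, Finset.sum_apply] at this
  have hval : ∑ s ∈ I, (πS x γ s ((πf x γ (f s)) η)) s₀ = f s₀ x := by
    rw [Finset.sum_congr rfl (fun s _ => h2 s s₀)]
    simp [Finset.sum_ite_eq, hs₀]
  rw [show ∑ s ∈ I, ((πS x γ s).comp (πf x γ (f s)) η) s₀
      = ∑ s ∈ I, (πS x γ s ((πf x γ (f s)) η)) s₀ from rfl, hval] at this
  exact hx this
end

section
/- Fix x ∈ X, t ∈ S, and an arbitrary function c : S(x) → ℂ. The linear map defined on finitely supported elements of ℓ²(S(x)) by ξ_y ↦ c(y) ξ_{σ_t(y)} extends to a bounded operator on ℓ²(S(x)) of norm at most 1 if and only if for every y ∈ S(x) one has ∑_{y' ∈ S(x), σ_t(y') = σ_t(y)} |c(y')|² ≤ 1. -/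
/-!
The operator is the adjoint of the weighted composition operator
`g ↦ (i ↦ conj (c i) * g (φ i))` from `ℓ²(κ)` to `ℓ²(ι)`, here with `φ = σ_t` on the orbit.
Grouping the terms of `∑ᵢ ‖c i‖² ‖g (φ i)‖²` along the fibres of `φ` shows that this operator
is a contraction as soon as every fibre sum `∑_{φ j = φ i} ‖c j‖²` is at most `1`. Conversely,
if `T` is a contraction with `T ξᵢ = c i ξ_{φ i}`, then `T† ξ_{φ i}` has entries `conj (c j)`
on the fibre through `i` and norm at most `1`.
-/

open scoped ComplexConjugate

namespace lp

variable {𝕜 ι κ : Type*} [RCLike 𝕜]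

theorem sum_sq_norm_le_sq_norm (f : ℓ²(ι, 𝕜)) (s : Finset ι) :
    ∑ i ∈ s, ‖f i‖ ^ 2 ≤ ‖f‖ ^ 2 := by
  simpa using lp.sum_rpow_le_norm_rpow (p := 2) (by norm_num) f s

theorem norm_le_of_forall_sum_sq_le {C : ℝ} (hC : 0 ≤ C) {f : ℓ²(ι, 𝕜)}
    (hf : ∀ s : Finset ι, ∑ i ∈ s, ‖f i‖ ^ 2 ≤ C ^ 2) : ‖f‖ ≤ C :=
  lp.norm_le_of_forall_sum_le (p := 2) (by norm_num) hC (by simpa using hf)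

theorem memℓp_two_of_forall_sum_sq_le {C : ℝ} {f : ι → 𝕜}
    (hf : ∀ s : Finset ι, ∑ i ∈ s, ‖f i‖ ^ 2 ≤ C) : Memℓp f 2 :=
  memℓp_gen (p := 2) (summable_of_sum_le (fun i => by positivity) (by simpa using hf))

theorem sum_sq_norm_mul_comp_le {φ : ι → κ} {w : ι → 𝕜}
    (hw : ∀ i (F : Finset {j // φ j = φ i}), ∑ j ∈ F, ‖w j‖ ^ 2 ≤ 1) (g : ℓ²(κ, 𝕜))
    (s : Finset ι) : ∑ i ∈ s, ‖w i * g (φ i)‖ ^ 2 ≤ ‖g‖ ^ 2 := by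
  classical
  calc ∑ i ∈ s, ‖w i * g (φ i)‖ ^ 2
      = ∑ k ∈ s.image φ, ‖g k‖ ^ 2 * ∑ i ∈ s with φ i = k, ‖w i‖ ^ 2 := by
        rw [← Finset.sum_fiberwise_of_maps_to fun i hi => Finset.mem_image_of_mem φ hi]
        refine Finset.sum_congr rfl fun k _ => ?_
        rw [Finset.mul_sum]
        refine Finset.sum_congr rfl fun i hi => ?_
        rw [(Finset.mem_filter.1 hi).2, norm_mul, mul_pow, mul_comm]
    _ ≤ ∑ k ∈ s.image φ, ‖g k‖ ^ 2 := by
        refine Finset.sum_le_sum fun k hk => ?_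
        obtain ⟨i, -, rfl⟩ := Finset.mem_image.1 hk
        refine mul_le_of_le_one_right (by positivity) ?_
        rw [← Finset.sum_subtype_eq_sum_filter]
        exact hw i _
    _ ≤ ‖g‖ ^ 2 := sum_sq_norm_le_sq_norm g _

noncomputable def weightedComp (φ : ι → κ) (w : ι → 𝕜)
    (hw : ∀ i (F : Finset {j // φ j = φ i}), ∑ j ∈ F, ‖w j‖ ^ 2 ≤ 1) :
    ℓ²(κ, 𝕜) →L[𝕜] ℓ²(ι, 𝕜) :=
  LinearMap.mkContinuous
    { toFun g := ⟨fun i => w i * g (φ i),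
        memℓp_two_of_forall_sum_sq_le (sum_sq_norm_mul_comp_le hw g)⟩
      map_add' g h := lp.ext <| funext fun i => by
        change w i * (g + h) (φ i) = w i * g (φ i) + w i * h (φ i)
        rw [lp.coeFn_add, Pi.add_apply, mul_add]
      map_smul' a g := lp.ext <| funext fun i => by
        change w i * (a • g) (φ i) = a * (w i * g (φ i))
        rw [lp.coeFn_smul, Pi.smul_apply, smul_eq_mul, mul_left_comm] }
    1 fun g => by
      rw [one_mul]
      exact norm_le_of_forall_sum_sq_le (norm_nonneg g) (sum_sq_norm_mul_comp_le hw g)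

theorem norm_weightedComp_le (φ : ι → κ) (w : ι → 𝕜)
    (hw : ∀ i (F : Finset {j // φ j = φ i}), ∑ j ∈ F, ‖w j‖ ^ 2 ≤ 1) :
    ‖weightedComp φ w hw‖ ≤ 1 :=
  LinearMap.mkContinuous_norm_le _ zero_le_one _

variable [DecidableEq ι]

theorem adjoint_apply (T : ℓ²(ι, 𝕜) →L[𝕜] ℓ²(κ, 𝕜)) (g : ℓ²(κ, 𝕜)) (i : ι) :
    T.adjoint g i = inner 𝕜 (T (lp.single 2 i 1)) g := by
  rw [← ContinuousLinearMap.adjoint_inner_right, lp.inner_single_left, RCLike.inner_apply',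
    map_one, one_mul]

variable [DecidableEq κ]

theorem adjoint_apply_of_map_single {φ : ι → κ} {c : ι → 𝕜} {T : ℓ²(ι, 𝕜) →L[𝕜] ℓ²(κ, 𝕜)}
    (hT : ∀ i, T (lp.single 2 i 1) = c i • lp.single 2 (φ i) 1) (g : ℓ²(κ, 𝕜)) (i : ι) :
    T.adjoint g i = conj (c i) * g (φ i) := by
  rw [adjoint_apply, hT, inner_smul_left, lp.inner_single_left, RCLike.inner_apply', map_one,
    one_mul]

theorem sum_sq_norm_fiber_le_of_map_single {φ : ι → κ} {c : ι → 𝕜}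
    {T : ℓ²(ι, 𝕜) →L[𝕜] ℓ²(κ, 𝕜)} (hT : ‖T‖ ≤ 1)
    (hTc : ∀ i, T (lp.single 2 i 1) = c i • lp.single 2 (φ i) 1)
    (i : ι) (F : Finset {j // φ j = φ i}) : ∑ j ∈ F, ‖c j‖ ^ 2 ≤ 1 := by
  obtain ⟨v, hv, hvc⟩ : ∃ v : ℓ²(ι, 𝕜), ‖v‖ ≤ 1 ∧ ∀ j : {j // φ j = φ i}, v j = conj (c j) := by
    refine ⟨T.adjoint (lp.single 2 (φ i) 1), ?_, fun j => ?_⟩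
    · calc _ ≤ ‖T.adjoint‖ * ‖lp.single 2 (φ i) (1 : 𝕜)‖ := T.adjoint.le_opNorm _
        _ ≤ 1 := by
          rwa [LinearIsometryEquiv.norm_map, lp.norm_single (by norm_num), norm_one, mul_one]
    · rw [adjoint_apply_of_map_single hTc, j.2, lp.single_apply_self, mul_one]
  calc ∑ j ∈ F, ‖c j‖ ^ 2 = ∑ j ∈ F.map (Function.Embedding.subtype _), ‖v j‖ ^ 2 := by
        rw [Finset.sum_map]
        refine Finset.sum_congr rfl fun j _ => ?_
        rw [Function.Embedding.subtype_apply, hvc, RCLike.norm_conj]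
    _ ≤ ‖v‖ ^ 2 := sum_sq_norm_le_sq_norm v _
    _ ≤ 1 := pow_le_one₀ (norm_nonneg v) hv

theorem adjoint_weightedComp_single (φ : ι → κ) (w : ι → 𝕜)
    (hw : ∀ i (F : Finset {j // φ j = φ i}), ∑ j ∈ F, ‖w j‖ ^ 2 ≤ 1) (i : ι) :
    (weightedComp φ w hw).adjoint (lp.single 2 i 1) = conj (w i) • lp.single 2 (φ i) 1 := by
  ext k
  rw [adjoint_apply, lp.inner_single_right, RCLike.inner_apply', mul_one]
  change conj (w i * (lp.single 2 k 1 : ℓ²(κ, 𝕜)) (φ i)) = _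
  by_cases h : φ i = k
  · subst h; simp
  · simp [h, Ne.symm h]

theorem exists_norm_le_one_map_single_iff (φ : ι → κ) (c : ι → 𝕜) :
    (∃ T : ℓ²(ι, 𝕜) →L[𝕜] ℓ²(κ, 𝕜),
      ‖T‖ ≤ 1 ∧ ∀ i, T (lp.single 2 i 1) = c i • lp.single 2 (φ i) 1) ↔
      ∀ i (F : Finset {j // φ j = φ i}), ∑ j ∈ F, ‖c j‖ ^ 2 ≤ 1 := by
  refine ⟨fun ⟨T, hT, hTc⟩ => sum_sq_norm_fiber_le_of_map_single hT hTc, fun hc => ?_⟩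
  have hc' : ∀ i (F : Finset {j // φ j = φ i}), ∑ j ∈ F, ‖conj (c j)‖ ^ 2 ≤ 1 := by
    simpa only [RCLike.norm_conj] using hc
  refine ⟨(weightedComp φ (fun i => conj (c i)) hc').adjoint, ?_, fun i => ?_⟩
  · rw [LinearIsometryEquiv.norm_map]
    exact norm_weightedComp_le _ _ _
  · rw [adjoint_weightedComp_single, RCLike.conj_conj]

end lp

theorem orbit_shift_bounded_iff_general
    {S : Type}
    {X : Type} [MetricSpace X] [DecidableEq X]
    (σ : S → C(X, X))
    (x : X) (t : S)
    -- the action of S on the orbit S(x) = {σ_s(x) : s ∈ S}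
    (στ : S → {y : X // ∃ s : S, (σ s) x = y} → {y : X // ∃ s : S, (σ s) x = y})
    (hστ : ∀ (u : S) (y : {y : X // ∃ s : S, (σ s) x = y}), (στ u y : X) = (σ u) (y : X))
    -- an arbitrary coefficient function on the orbit
    (c : {y : X // ∃ s : S, (σ s) x = y} → ℂ) :
    (∃ T : lp (fun _ : {y : X // ∃ s : S, (σ s) x = y} => ℂ) 2 →L[ℂ]
        lp (fun _ : {y : X // ∃ s : S, (σ s) x = y} => ℂ) 2,
      ‖T‖ ≤ 1 ∧
      ∀ y : {y : X // ∃ s : S, (σ s) x = y},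
        T (lp.single 2 y (1 : ℂ)) = c y • lp.single 2 (στ t y) (1 : ℂ)) ↔
    (∀ (y : {y : X // ∃ s : S, (σ s) x = y})
      (F : Finset {y' : {y : X // ∃ s : S, (σ s) x = y} // (σ t) (y' : X) = (σ t) (y : X)}),
      ∑ y' ∈ F, ‖c (y' : {y : X // ∃ s : S, (σ s) x = y})‖ ^ 2 ≤ 1) := by
  rw [lp.exists_norm_le_one_map_single_iff]
  refine forall_congr' fun y => ?_
  have same_fibers : (fun y' => στ t y' = στ t y) =
      fun y' : {y : X // ∃ s : S, (σ s) x = y} => σ t y' = σ t y :=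
    funext fun y' => propext (by rw [Subtype.ext_iff, hστ, hστ])
  rw [same_fibers]

/-- the prescription `ξ_y ↦ c(y) ξ_{σ_t(y)}` on finitely supported vectors
extends to a bounded operator of norm at most 1 on `ℓ²(S(x))` if and only if
`∑_{σ_t(y') = σ_t(y)} |c(y')|² ≤ 1` for every `y ∈ S(x)`. -/
theorem orbit_shift_bounded_iff
    {S : Type} [AddCancelCommMonoid S] [Countable S] [DecidableEq S]
    {X : Type} [MetricSpace X] [CompactSpace X] [Nonempty X] [DecidableEq X]
    (σ : S → C(X, X))
    (hσ0 : σ 0 = ContinuousMap.id X)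
    (hσadd : ∀ s t : S, σ (s + t) = (σ s).comp (σ t))
    (hσsurj : ∀ s : S, Function.Surjective (σ s))
    (x : X) (t : S)
    -- the action of S on the orbit S(x) = {σ_s(x) : s ∈ S}
    (στ : S → {y : X // ∃ s : S, (σ s) x = y} → {y : X // ∃ s : S, (σ s) x = y})
    (hστ : ∀ (u : S) (y : {y : X // ∃ s : S, (σ s) x = y}), (στ u y : X) = (σ u) (y : X))
    -- an arbitrary coefficient function on the orbit
    (c : {y : X // ∃ s : S, (σ s) x = y} → ℂ) :
    (∃ T : lp (fun _ : {y : X // ∃ s : S, (σ s) x = y} => ℂ) 2 →L[ℂ]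
        lp (fun _ : {y : X // ∃ s : S, (σ s) x = y} => ℂ) 2,
      ‖T‖ ≤ 1 ∧
      ∀ y : {y : X // ∃ s : S, (σ s) x = y},
        T (lp.single 2 y (1 : ℂ)) = c y • lp.single 2 (στ t y) (1 : ℂ)) ↔
    (∀ (y : {y : X // ∃ s : S, (σ s) x = y})
      (F : Finset {y' : {y : X // ∃ s : S, (σ s) x = y} // (σ t) (y' : X) = (σ t) (y : X)}),
      ∑ y' ∈ F, ‖c (y' : {y : X // ∃ s : S, (σ s) x = y})‖ ^ 2 ≤ 1) :=
  orbit_shift_bounded_iff_general σ x t στ hστ c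
end

section
/- Fix x ∈ X and assume the map s ↦ σ_s(x) from S to X is finite-to-one. Then: (i) for all u, u' ∈ S with σ_u(x) = σ_{u'}(x) one has Q^⊥ ξ_u = Q^⊥ ξ_{u'}; and (ii) Q^⊥ ξ_u ≠ 0 for every u ∈ S. -/
/-! For `σ_u(x) = σ_{u'}(x)` the vector `ξ_u - ξ_{u'}` lies in `H₀`, so `Q` fixes it and `Q^⊥` does not
separate `ξ_u` from `ξ_{u'}`. For (ii), finiteness of the fibre `F` of `σ_u(x)` makes its indicator
`∑_{s ∈ F} ξ_s` a vector of `ℓ²(S)`; it is orthogonal to every generator of `H₀`, hence to `closure H₀`,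
but not to `ξ_u`. So `ξ_u ∉ closure H₀ ⊇ range Q`, i.e. `Q^⊥ ξ_u ≠ 0`. -/

open scoped InnerProductSpace

namespace FiberDiffSpan

variable {ι Y : Type*} [DecidableEq ι]

/-- The subspace `H₀` for the map `f = (s ↦ σ_s(x))`. -/
noncomputable def fiberDiffSpan (f : ι → Y) : Submodule ℂ (lp (fun _ : ι => ℂ) 2) :=
  Submodule.span ℂ {v | ∃ s t, f s = f t ∧ v = lp.single 2 s (1 : ℂ) - lp.single 2 t (1 : ℂ)}

theorem single_sub_single_mem_closure {f : ι → Y} {s t : ι} (h : f s = f t) :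
    lp.single 2 s (1 : ℂ) - lp.single 2 t (1 : ℂ) ∈ (fiberDiffSpan f).topologicalClosure :=
  Submodule.le_topologicalClosure _ (Submodule.subset_span ⟨s, t, h, rfl⟩)

theorem inner_sum_single_one (F : Finset ι) (v : lp (fun _ : ι => ℂ) 2) :
    ⟪∑ s ∈ F, lp.single 2 s (1 : ℂ), v⟫_ℂ = ∑ s ∈ F, v s := by
  rw [sum_inner]
  refine Finset.sum_congr rfl fun s _ => ?_
  simp [lp.inner_single_left]

theorem sum_apply_single_sub_single_eq_zero {F : Finset ι} {s t : ι} (hst : s ∈ F ↔ t ∈ F) :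
    ∑ r ∈ F, (lp.single 2 s (1 : ℂ) - lp.single 2 t (1 : ℂ) : lp (fun _ : ι => ℂ) 2) r = 0 := by
  simp only [lp.coeFn_sub, Pi.sub_apply, lp.single_apply, Pi.single_apply, Finset.sum_sub_distrib,
    Finset.sum_ite_eq']
  by_cases hs : s ∈ F <;> simp [hs, ← hst]

theorem closure_le_orthogonal_sum_single {f : ι → Y} {F : Finset ι}
    (hF : ∀ s t, f s = f t → (s ∈ F ↔ t ∈ F)) :
    (fiberDiffSpan f).topologicalClosure ≤ (ℂ ∙ ∑ s ∈ F, lp.single 2 s (1 : ℂ))ᗮ := by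
  refine Submodule.topologicalClosure_minimal _ ?_ (Submodule.isClosed_orthogonal _)
  rw [fiberDiffSpan, Submodule.span_le]
  rintro v ⟨s, t, hst, rfl⟩
  rw [SetLike.mem_coe, Submodule.mem_orthogonal_singleton_iff_inner_right, inner_sum_single_one]
  exact sum_apply_single_sub_single_eq_zero (hF s t hst)

theorem single_notMem_closure {f : ι → Y} {u : ι} (hfin : {s | f s = f u}.Finite) :
    lp.single 2 u (1 : ℂ) ∉ (fiberDiffSpan f).topologicalClosure := by
  intro hu
  have hF : ∀ s t, f s = f t → (s ∈ hfin.toFinset ↔ t ∈ hfin.toFinset) := by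
    intro s t hst
    simp [hst]
  have horth := closure_le_orthogonal_sum_single hF hu
  rw [Submodule.mem_orthogonal_singleton_iff_inner_right, inner_sum_single_one,
    Finset.sum_eq_single_of_mem u (by simp) fun r _ hru => lp.single_apply_ne 2 u 1 hru,
    lp.single_apply_self] at horth
  exact one_ne_zero horth

end FiberDiffSpan

open FiberDiffSpan in
theorem Qperp_basis_vectors_general
    {S : Type} [AddCancelCommMonoid S] [DecidableEq S]
    {X : Type} [MetricSpace X]
    (σ : S → C(X, X))
    (x : X)
    -- the map s ↦ σ_s(x) is finite-to-one
    (hfin : ∀ y : X, {s : S | (σ s) x = y}.Finite)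
    -- Q is the orthogonal projection of ℓ²(S) onto H₀
    (Q : lp (fun _ : S => ℂ) 2 →L[ℂ] lp (fun _ : S => ℂ) 2)
    (hQmem : ∀ η : lp (fun _ : S => ℂ) 2,
      Q η ∈ (Submodule.span ℂ {v : lp (fun _ : S => ℂ) 2 | ∃ s t : S,
        (σ s) x = (σ t) x ∧ v = lp.single 2 s (1 : ℂ) - lp.single 2 t (1 : ℂ)}).topologicalClosure)
    (hQfix : ∀ η ∈ (Submodule.span ℂ {v : lp (fun _ : S => ℂ) 2 | ∃ s t : S,
        (σ s) x = (σ t) x ∧ v = lp.single 2 s (1 : ℂ) - lp.single 2 t (1 : ℂ)}).topologicalClosure,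
      Q η = η) :
    -- (i) Q^⊥ξ_u depends only on the orbit point σ_u(x)
    (∀ u u' : S, (σ u) x = (σ u') x →
      lp.single 2 u (1 : ℂ) - Q (lp.single 2 u (1 : ℂ)) =
        lp.single 2 u' (1 : ℂ) - Q (lp.single 2 u' (1 : ℂ))) ∧
    -- (ii) Q^⊥ξ_u is never zero
    (∀ u : S, lp.single 2 u (1 : ℂ) - Q (lp.single 2 u (1 : ℂ)) ≠ 0) := by
  set f : S → X := fun s => σ s x
  refine ⟨fun u u' h => ?_, fun u hu => ?_⟩
  · have hfix := hQfix _ (single_sub_single_mem_closure (f := f) h)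
    rw [sub_eq_sub_iff_sub_eq_sub, ← map_sub, hfix]
  · refine single_notMem_closure (f := f) (hfin (f u)) ?_
    rw [sub_eq_zero.mp hu]
    exact hQmem _

/-- with `Q` the orthogonal projection of `ℓ²(S)` onto `H₀`, if the map
`s ↦ σ_s(x)` is finite-to-one then `Q^⊥ ξ_u` depends only on the orbit point `σ_u(x)`,
and `Q^⊥ ξ_u ≠ 0` for every `u`. -/
theorem Qperp_basis_vectors
    {S : Type} [AddCancelCommMonoid S] [Countable S] [DecidableEq S]
    {X : Type} [MetricSpace X] [CompactSpace X] [Nonempty X]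
    (σ : S → C(X, X))
    (hσ0 : σ 0 = ContinuousMap.id X)
    (hσadd : ∀ s t : S, σ (s + t) = (σ s).comp (σ t))
    (hσsurj : ∀ s : S, Function.Surjective (σ s))
    (x : X)
    -- the map s ↦ σ_s(x) is finite-to-one
    (hfin : ∀ y : X, {s : S | (σ s) x = y}.Finite)
    -- Q is the orthogonal projection of ℓ²(S) onto H₀
    (Q : lp (fun _ : S => ℂ) 2 →L[ℂ] lp (fun _ : S => ℂ) 2)
    (hQmem : ∀ η : lp (fun _ : S => ℂ) 2,
      Q η ∈ (Submodule.span ℂ {v : lp (fun _ : S => ℂ) 2 | ∃ s t : S,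
        (σ s) x = (σ t) x ∧ v = lp.single 2 s (1 : ℂ) - lp.single 2 t (1 : ℂ)}).topologicalClosure)
    (hQfix : ∀ η ∈ (Submodule.span ℂ {v : lp (fun _ : S => ℂ) 2 | ∃ s t : S,
        (σ s) x = (σ t) x ∧ v = lp.single 2 s (1 : ℂ) - lp.single 2 t (1 : ℂ)}).topologicalClosure,
      Q η = η)
    (hQorth : ∀ (η : lp (fun _ : S => ℂ) 2),
      ∀ v ∈ (Submodule.span ℂ {v : lp (fun _ : S => ℂ) 2 | ∃ s t : S,
        (σ s) x = (σ t) x ∧ v = lp.single 2 s (1 : ℂ) - lp.single 2 t (1 : ℂ)}).topologicalClosure,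
      inner ℂ (η - Q η) v = (0 : ℂ)) :
    -- (i) Q^⊥ξ_u depends only on the orbit point σ_u(x)
    (∀ u u' : S, (σ u) x = (σ u') x →
      lp.single 2 u (1 : ℂ) - Q (lp.single 2 u (1 : ℂ)) =
        lp.single 2 u' (1 : ℂ) - Q (lp.single 2 u' (1 : ℂ))) ∧
    -- (ii) Q^⊥ξ_u is never zero
    (∀ u : S, lp.single 2 u (1 : ℂ) - Q (lp.single 2 u (1 : ℂ)) ≠ 0) :=
  Qperp_basis_vectors_general σ x hfin Q hQmem hQfix
end

section
/- Fix x ∈ X and assume the map s ↦ σ_s(x) from S to X is finite-to-one. Then the left regular orbit cocycle μ_x, defined by μ_x(t, y) = ‖Q^⊥ ξ_{t+u}‖ / ‖Q^⊥ ξ_u‖ whenever y = σ_u(x), is well defined (independent of the choice of u with σ_u(x) = y), satisfies μ_x(t, y) > 0 for all t ∈ S and y ∈ S(x), and is an orbit cocycle at x: (1) for every t ∈ S and y ∈ S(x), ∑_{y' ∈ S(x), σ_t(y') = σ_t(y)} μ_x(t, y')² ≤ 1, and (2) μ_x(s+t, y) = μ_x(t, y) μ_x(s, σ_t(y)) for all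 s, t ∈ S and y ∈ S(x). -/
/-!
Let `n(y)` be the number of `s` with `σ_s(x) = y`. The normalized indicator of the fibre through `u`
is orthogonal to `H₀` (it takes equal values at `s` and `t` whenever `σ_s(x) = σ_t(x)`) and differs
from `ξ_u` by an average of generators `ξ_u − ξ_s` of `H₀`; hence it is `Q^⊥ξ_u`, of norm
`n(σ_u(x))^{-1/2}`. So `μ_x(t, y) = √(n(y) / n(σ_t(y)))`, which is well defined, positive and
multiplicative along the action, and (1) holds because translation by `t` maps the disjoint fibres
over the points `y'` injectively into the fibre over `σ_t(y)`.
-/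

open Finset
open scoped lp

section FiberIndicator

variable {𝕜 : Type*} [RCLike 𝕜] {S : Type*} [DecidableEq S] {Y : Type*}

theorem orthonormal_lp_single_one : Orthonormal 𝕜 (fun s : S => lp.single 2 s (1 : 𝕜)) := by
  convert (default : HilbertBasis S 𝕜 ℓ²(S, 𝕜)).orthonormal with s
  rw [← HilbertBasis.repr_symm_single]
  rfl

variable (𝕜) in
noncomputable def normalizedIndicator (F : Finset S) : ℓ²(S, 𝕜) :=
  (F.card : 𝕜)⁻¹ • ∑ s ∈ F, lp.single 2 s 1

theorem inner_normalizedIndicator_single (F : Finset S) (r : S) :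
    inner 𝕜 (normalizedIndicator 𝕜 F) (lp.single 2 r 1) = if r ∈ F then (F.card : 𝕜)⁻¹ else 0 := by
  rw [normalizedIndicator, inner_smul_left, sum_inner]
  simp only [orthonormal_iff_ite.1 orthonormal_lp_single_one, sum_ite_eq', map_inv₀, map_natCast]
  split_ifs <;> simp

theorem norm_normalizedIndicator (F : Finset S) :
    ‖normalizedIndicator 𝕜 F‖ = (√F.card)⁻¹ := by
  have hsum := lp.norm_sum_single (p := 2) (by norm_num) (fun _ : S => (1 : 𝕜)) F
  simp only [norm_one, ENNReal.toReal_ofNat, sum_const, nsmul_eq_mul, Real.rpow_two,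
    one_pow, mul_one] at hsum
  rw [normalizedIndicator, norm_smul, norm_inv, RCLike.norm_natCast,
    ← Real.sqrt_sq (norm_nonneg (∑ s ∈ F, _)), hsum, inv_mul_eq_div, Real.sqrt_div_self', one_div]

theorem single_sub_normalizedIndicator {F : Finset S} {u : S} (hu : u ∈ F) :
    lp.single 2 u (1 : 𝕜) - normalizedIndicator 𝕜 F
      = (F.card : 𝕜)⁻¹ • ∑ s ∈ F, (lp.single 2 u 1 - lp.single 2 s 1) := by
  have hcard : (F.card : 𝕜) ≠ 0 := Nat.cast_ne_zero.2 (card_ne_zero_of_mem hu)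
  rw [sum_sub_distrib, sum_const, smul_sub, ← Nat.cast_smul_eq_nsmul 𝕜, smul_smul,
    inv_mul_cancel₀ hcard, one_smul, normalizedIndicator]

variable (𝕜) in
noncomputable def fiberDiffSpan (f : S → Y) : Submodule 𝕜 ℓ²(S, 𝕜) :=
  Submodule.span 𝕜 {v | ∃ s t : S, f s = f t ∧ v = lp.single 2 s 1 - lp.single 2 t 1}

theorem normalizedIndicator_mem_orthogonal {f : S → Y} {F : Finset S} {y : Y}
    (hF : ∀ s, s ∈ F ↔ f s = y) : normalizedIndicator 𝕜 F ∈ (fiberDiffSpan 𝕜 f)ᗮ := by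
  rw [← Submodule.span_singleton_le_iff_mem, ← Submodule.isOrtho_iff_le, Submodule.isOrtho_comm,
    Submodule.isOrtho_iff_le, fiberDiffSpan, Submodule.span_le]
  rintro _ ⟨s, t, hst, rfl⟩
  have hmem : s ∈ F ↔ t ∈ F := by rw [hF, hF, hst]
  rw [SetLike.mem_coe, Submodule.mem_orthogonal_singleton_iff_inner_right, inner_sub_right,
    inner_normalizedIndicator_single, inner_normalizedIndicator_single, if_congr hmem rfl rfl,
    sub_self]

theorem single_sub_normalizedIndicator_mem {f : S → Y} {F : Finset S} {u : S}
    (hF : ∀ s, s ∈ F ↔ f s = f u) :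
    lp.single 2 u 1 - normalizedIndicator 𝕜 F ∈ fiberDiffSpan 𝕜 f := by
  rw [single_sub_normalizedIndicator ((hF u).2 rfl)]
  refine Submodule.smul_mem _ _ (Submodule.sum_mem _ fun s hs => Submodule.subset_span ?_)
  exact ⟨u, s, ((hF s).1 hs).symm, rfl⟩

theorem Submodule.eq_of_sub_mem_of_mem_orthogonal {E : Type*} [NormedAddCommGroup E]
    [InnerProductSpace 𝕜 E] {K : Submodule 𝕜 E} {v w : E} (hv : v ∈ Kᗮ) (hw : w ∈ Kᗮ)
    (h : v - w ∈ K) : v = w :=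
  sub_eq_zero.1 (Submodule.disjoint_def.1 K.orthogonal_disjoint _ h (Kᗮ.sub_mem hv hw))

theorem single_sub_eq_normalizedIndicator {f : S → Y} {u : S} {F : Finset S}
    (hF : ∀ s, s ∈ F ↔ f s = f u) {p : ℓ²(S, 𝕜)} (hp : p ∈ (fiberDiffSpan 𝕜 f).topologicalClosure)
    (hperp : lp.single 2 u 1 - p ∈ (fiberDiffSpan 𝕜 f).topologicalClosureᗮ) :
    lp.single 2 u 1 - p = normalizedIndicator 𝕜 F := by
  refine Submodule.eq_of_sub_mem_of_mem_orthogonal hperp ?_ ?_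
  · rw [Submodule.orthogonal_closure]
    exact normalizedIndicator_mem_orthogonal hF
  · rw [sub_right_comm]
    exact Submodule.sub_mem _
      (Submodule.le_topologicalClosure _ (single_sub_normalizedIndicator_mem hF)) hp

end FiberIndicator

theorem sum_ncard_fiber_le {S Y ι : Type*} [Add S] [IsLeftCancelAdd S] {f : S → Y} {g : Y → Y}
    {t : S} (hfg : ∀ r, f (t + r) = g (f r)) (hfin : ∀ y, {s | f s = y}.Finite) {e : ι → Y}
    (he : Function.Injective e) (F : Finset ι) {z : Y} (hF : ∀ i ∈ F, g (e i) = z) :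
    ∑ i ∈ F, {s | f s = e i}.ncard ≤ {s | f s = z}.ncard := by
  have hdisj : (F : Set ι).PairwiseDisjoint fun i => {s | f s = e i} := fun i _ j _ hij =>
    Set.disjoint_left.2 fun s hi hj => hij (he (hi.symm.trans hj))
  rw [← finsum_mem_coe_finset, ← Set.Finite.ncard_biUnion F.finite_toSet (fun i _ => hfin _) hdisj]
  refine Set.ncard_le_ncard_of_injOn (t + ·) ?_ (fun a _ b _ => add_left_cancel) (hfin z)
  simp only [Set.mem_iUnion₂]
  rintro s ⟨i, hi, hs : f s = e i⟩
  show f (t + s) = z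
  rw [hfg, hs, hF i hi]

theorem left_regular_orbit_cocycle_general
    {S : Type} [AddCancelCommMonoid S] [DecidableEq S]
    {X : Type} [MetricSpace X]
    (σ : S → C(X, X))
    (hσadd : ∀ s t : S, σ (s + t) = (σ s).comp (σ t))
    (x : X)
    -- the map s ↦ σ_s(x) is finite-to-one
    (hfin : ∀ y : X, {s : S | (σ s) x = y}.Finite)
    -- the action of S on the orbit S(x)
    (στ : S → {y : X // ∃ s : S, (σ s) x = y} → {y : X // ∃ s : S, (σ s) x = y})
    (hστ : ∀ (t : S) (y : {y : X // ∃ s : S, (σ s) x = y}), (στ t y : X) = (σ t) (y : X))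
    -- Q is the orthogonal projection of ℓ²(S) onto H₀
    (Q : lp (fun _ : S => ℂ) 2 →L[ℂ] lp (fun _ : S => ℂ) 2)
    (hQmem : ∀ η : lp (fun _ : S => ℂ) 2,
      Q η ∈ (Submodule.span ℂ {v : lp (fun _ : S => ℂ) 2 | ∃ s t : S,
        (σ s) x = (σ t) x ∧ v = lp.single 2 s (1 : ℂ) - lp.single 2 t (1 : ℂ)}).topologicalClosure)
    (hQorth : ∀ (η : lp (fun _ : S => ℂ) 2),
      ∀ v ∈ (Submodule.span ℂ {v : lp (fun _ : S => ℂ) 2 | ∃ s t : S,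
        (σ s) x = (σ t) x ∧ v = lp.single 2 s (1 : ℂ) - lp.single 2 t (1 : ℂ)}).topologicalClosure,
      inner ℂ (η - Q η) v = (0 : ℂ)) :
    -- there is a well-defined left regular orbit cocycle, and it is a strictly positive
    -- orbit cocycle at x
    ∃ μx : S → {y : X // ∃ s : S, (σ s) x = y} → ℝ,
      (∀ (t u : S),
        μx t ⟨(σ u) x, ⟨u, rfl⟩⟩ =
          ‖lp.single 2 (t + u) (1 : ℂ) - Q (lp.single 2 (t + u) (1 : ℂ))‖ /
            ‖lp.single 2 u (1 : ℂ) - Q (lp.single 2 u (1 : ℂ))‖) ∧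
      (∀ (t : S) (y : {y : X // ∃ s : S, (σ s) x = y}), 0 < μx t y) ∧
      (∀ (t : S) (y : {y : X // ∃ s : S, (σ s) x = y})
        (F : Finset {y' : {y : X // ∃ s : S, (σ s) x = y} // (σ t) (y' : X) = (σ t) (y : X)}),
        ∑ y' ∈ F, (μx t (y' : {y : X // ∃ s : S, (σ s) x = y})) ^ 2 ≤ 1) ∧
      (∀ (s t : S) (y : {y : X // ∃ s : S, (σ s) x = y}),
        μx (s + t) y = μx t y * μx s (στ t y)) := by
  set n : X → ℝ := fun y => {s | σ s x = y}.ncard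
  have hact : ∀ t r, σ (t + r) x = σ t (σ r x) := fun t r => by rw [hσadd]; rfl
  have hpos : ∀ y : {y : X // ∃ s : S, (σ s) x = y}, 0 < n y := fun ⟨y, s, hs⟩ =>
    Nat.cast_pos.2 ((Set.ncard_pos (hfin y)).2 ⟨s, hs⟩)
  have hpos_act : ∀ t (y : {y : X // ∃ s : S, (σ s) x = y}), 0 < n (σ t y) := fun t ⟨y, s, hs⟩ =>
    hpos ⟨σ t y, t + s, by rw [hact, hs]⟩
  have hnorm : ∀ u, ‖lp.single 2 u (1 : ℂ) - Q (lp.single 2 u 1)‖ = (√(n (σ u x)))⁻¹ := fun u => by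
    rw [single_sub_eq_normalizedIndicator (F := (hfin (σ u x)).toFinset) (by simp) (hQmem _)
      ((Submodule.mem_orthogonal' _ _).2 (hQorth _)), norm_normalizedIndicator,
      ← Set.ncard_eq_toFinset_card _ (hfin _)]
  refine ⟨fun t y => √(n y / n (σ t y)), fun t u => ?_, fun t y => ?_, fun t y F => ?_,
    fun s t y => ?_⟩
  · dsimp only
    rw [hnorm, hnorm, hact, Real.sqrt_div' _ (hpos_act t ⟨_, u, rfl⟩).le, inv_div_inv]
  · exact Real.sqrt_pos.2 (div_pos (hpos y) (hpos_act t y))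
  · have hsum := sum_ncard_fiber_le (hact t) hfin (e := fun y' => (y'.1 : X))
      (Subtype.val_injective.comp Subtype.val_injective) F (fun y' _ => y'.2)
    calc ∑ y' ∈ F, √(n y' / n (σ t y')) ^ 2 = (∑ y' ∈ F, n y') / n (σ t y) := by
          rw [sum_div]
          exact sum_congr rfl fun y' _ => by rw [y'.2, Real.sq_sqrt (by positivity)]
      _ ≤ 1 := div_le_one_of_le₀ (by simp only [n]; exact_mod_cast hsum) (hpos_act t y).le
  · simp only [hστ, hσadd, ContinuousMap.comp_apply]
    rw [← Real.sqrt_mul (by positivity), div_mul_div_cancel₀ (hpos_act t y).ne']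

/-- the left regular orbit cocycle `μ_x(t, y) = ‖Q^⊥ξ_{t+u}‖/‖Q^⊥ξ_u‖`
(for `y = σ_u(x)`) is well defined, strictly positive, and an orbit cocycle at `x`. -/
theorem left_regular_orbit_cocycle
    {S : Type} [AddCancelCommMonoid S] [Countable S] [DecidableEq S]
    {X : Type} [MetricSpace X] [CompactSpace X] [Nonempty X]
    (σ : S → C(X, X))
    (hσ0 : σ 0 = ContinuousMap.id X)
    (hσadd : ∀ s t : S, σ (s + t) = (σ s).comp (σ t))
    (hσsurj : ∀ s : S, Function.Surjective (σ s))
    (x : X)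
    -- the map s ↦ σ_s(x) is finite-to-one
    (hfin : ∀ y : X, {s : S | (σ s) x = y}.Finite)
    -- the action of S on the orbit S(x)
    (στ : S → {y : X // ∃ s : S, (σ s) x = y} → {y : X // ∃ s : S, (σ s) x = y})
    (hστ : ∀ (t : S) (y : {y : X // ∃ s : S, (σ s) x = y}), (στ t y : X) = (σ t) (y : X))
    -- Q is the orthogonal projection of ℓ²(S) onto H₀
    (Q : lp (fun _ : S => ℂ) 2 →L[ℂ] lp (fun _ : S => ℂ) 2)
    (hQmem : ∀ η : lp (fun _ : S => ℂ) 2,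
      Q η ∈ (Submodule.span ℂ {v : lp (fun _ : S => ℂ) 2 | ∃ s t : S,
        (σ s) x = (σ t) x ∧ v = lp.single 2 s (1 : ℂ) - lp.single 2 t (1 : ℂ)}).topologicalClosure)
    (hQfix : ∀ η ∈ (Submodule.span ℂ {v : lp (fun _ : S => ℂ) 2 | ∃ s t : S,
        (σ s) x = (σ t) x ∧ v = lp.single 2 s (1 : ℂ) - lp.single 2 t (1 : ℂ)}).topologicalClosure,
      Q η = η)
    (hQorth : ∀ (η : lp (fun _ : S => ℂ) 2),
      ∀ v ∈ (Submodule.span ℂ {v : lp (fun _ : S => ℂ) 2 | ∃ s t : S,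
        (σ s) x = (σ t) x ∧ v = lp.single 2 s (1 : ℂ) - lp.single 2 t (1 : ℂ)}).topologicalClosure,
      inner ℂ (η - Q η) v = (0 : ℂ)) :
    -- there is a well-defined left regular orbit cocycle, and it is a strictly positive
    -- orbit cocycle at x
    ∃ μx : S → {y : X // ∃ s : S, (σ s) x = y} → ℝ,
      (∀ (t u : S),
        μx t ⟨(σ u) x, ⟨u, rfl⟩⟩ =
          ‖lp.single 2 (t + u) (1 : ℂ) - Q (lp.single 2 (t + u) (1 : ℂ))‖ /
            ‖lp.single 2 u (1 : ℂ) - Q (lp.single 2 u (1 : ℂ))‖) ∧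
      (∀ (t : S) (y : {y : X // ∃ s : S, (σ s) x = y}), 0 < μx t y) ∧
      (∀ (t : S) (y : {y : X // ∃ s : S, (σ s) x = y})
        (F : Finset {y' : {y : X // ∃ s : S, (σ s) x = y} // (σ t) (y' : X) = (σ t) (y : X)}),
        ∑ y' ∈ F, (μx t (y' : {y : X // ∃ s : S, (σ s) x = y})) ^ 2 ≤ 1) ∧
      (∀ (s t : S) (y : {y : X // ∃ s : S, (σ s) x = y}),
        μx (s + t) y = μx t y * μx s (στ t y)) :=
  left_regular_orbit_cocycle_general σ hσadd x hfin στ hστ Q hQmem hQorth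
end

section
/- Fix x ∈ X, assume the map s ↦ σ_s(x) is finite-to-one, and let γ be a character of S. With W : ℓ²(S(x)) → H_0^⊥ the unitary determined by W ξ_{σ_u(x)} = Q^⊥ ξ_u / ‖Q^⊥ ξ_u‖, and μ_x the left regular orbit cocycle, one has W* Q^⊥ π_{x,γ}(S_t) W = ρ_{x, γμ_x}(S_t) for all t ∈ S and W* Q^⊥ π_{x,γ}(f) W = ρ_{x, γμ_x}(f) for all f ∈ C(X). Consequently, for every finite set I ⊆ S and functions f_s ∈ C(X) (s ∈ I), ‖∑_{s∈I} ρ_{x,γμ_x}(S_s) ρ_{x,γμ_x}(f_s)‖ ≤ ‖∑_{s∈I} π_{x,γ}(S_s) π_{x,γ}(f_s)‖. -/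
/-!
The closed span `H₀` of the vectors `ξ_s - ξ_t` with `σ_s(x) = σ_t(x)` is invariant under every
`π(S_t)` and `π(f)`, since both send such a generator to a multiple of another one. Hence
`Q^⊥ π Q = 0`, so `Q^⊥ π W e_{σ_u(x)}` is `‖Q^⊥ ξ_u‖⁻¹ Q^⊥ π ξ_u`, a multiple of `Q^⊥ ξ_{t+u}`;
as `W* W = 1` and `Q^⊥ ξ_{t+u} = ‖Q^⊥ ξ_{t+u}‖ W e_{σ_{t+u}(x)}`, the compression sends
`e_{σ_u(x)}` to `γ(t) μ_x(t, σ_u(x)) e_{σ_{t+u}(x)}`. The same computation handles the products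
`π(S_t) π(f)`, and the norm inequality holds because `W*`, `Q^⊥` and `W` are contractions.
-/

open ContinuousLinearMap Set
open scoped ENNReal

theorem Submodule.mapsTo_topologicalClosure_span {R M : Type*} [Semiring R] [AddCommMonoid M]
    [Module R M] [TopologicalSpace M] [ContinuousAdd M] [ContinuousConstSMul R M] {s : Set M}
    (A : M →L[R] M) (hA : ∀ v ∈ s, ∃ c : R, ∃ w ∈ s, A v = c • w) :
    MapsTo A (span R s).topologicalClosure (span R s).topologicalClosure := by
  have hgen : s ⊆ (span R s).topologicalClosure.comap (A : M →ₗ[R] M) := by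
    intro v hv
    obtain ⟨c, w, hw, hAv⟩ := hA v hv
    rw [SetLike.mem_coe, mem_comap, coe_coe, hAv]
    exact smul_mem _ c (le_topologicalClosure _ (subset_span hw))
  exact fun v hv => topologicalClosure_minimal _ (span_le.2 hgen)
    ((isClosed_topologicalClosure _).preimage A.continuous) hv

theorem ne_zero_of_map_eq_norm_inv_smul {E F : Type*} [NormedAddCommGroup E] [NormedSpace ℝ E]
    [NormedAddCommGroup F] {W : F → E} (hW : ∀ η, ‖W η‖ = ‖η‖) {e : F} (he : e ≠ 0) {v : E}
    (hWe : W e = ‖v‖⁻¹ • v) : v ≠ 0 := by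
  rintro rfl
  rw [smul_zero, ← norm_eq_zero, hW, norm_eq_zero] at hWe
  exact he hWe

section Hilbert

variable {𝕜 E F : Type*} [RCLike 𝕜]
  [NormedAddCommGroup E] [InnerProductSpace 𝕜 E] [CompleteSpace E]
  [NormedAddCommGroup F] [InnerProductSpace 𝕜 F] [CompleteSpace F]

theorem adjoint_apply_sub_starProjection_apply_of_mapsTo (K : Submodule 𝕜 E)
    [K.HasOrthogonalProjection] {W : F →L[𝕜] E} (hW : ∀ η, ‖W η‖ = ‖η‖)
    {B : E →L[𝕜] E} (hB : MapsTo B K K) {ξ ξ' : E} {e e' : F} {a c c' : 𝕜}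
    (hWe : W e = c • (ξ - K.starProjection ξ)) (hWe' : ξ' - K.starProjection ξ' = c' • W e')
    (hBξ : B ξ = a • ξ') :
    adjoint W ((ContinuousLinearMap.id 𝕜 E - K.starProjection) (B (W e))) = (c * a * c') • e' := by
  have hWW : adjoint W (W e') = e' := by
    rw [← comp_apply, (norm_map_iff_adjoint_comp_self W).1 hW, one_apply_eq_self]
  have hBK : K.starProjection (B (K.starProjection ξ)) = B (K.starProjection ξ) :=
    K.starProjection_eq_self_iff.2 (hB (K.starProjection_apply_mem ξ))
  have hPBW : (ContinuousLinearMap.id 𝕜 E - K.starProjection) (B (W e)) = (c * a * c') • W e' := by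
    rw [hWe, map_smul, map_sub, hBξ]
    simp only [sub_apply, id_apply, map_smul, map_sub, hBK]
    rw [sub_self, sub_zero, hWe', smul_smul, smul_smul]
  rw [hPBW, map_smul, hWW]

theorem norm_adjoint_comp_sub_starProjection_comp_le (K : Submodule 𝕜 E)
    [K.HasOrthogonalProjection] {W : F →L[𝕜] E} (hW : ∀ η, ‖W η‖ = ‖η‖) (T : E →L[𝕜] E) :
    ‖(adjoint W).comp ((ContinuousLinearMap.id 𝕜 E - K.starProjection).comp (T.comp W))‖ ≤ ‖T‖ := by
  have hWnorm : ‖W‖ ≤ 1 := opNorm_le_bound W zero_le_one fun η => by rw [hW, one_mul]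
  have hP : ‖ContinuousLinearMap.id 𝕜 E - K.starProjection‖ ≤ 1 := by
    rw [← K.starProjection_orthogonal]
    exact Kᗮ.starProjection_norm_le
  calc _ ≤ ‖adjoint W‖ * (‖ContinuousLinearMap.id 𝕜 E - K.starProjection‖ * (‖T‖ * ‖W‖)) := by
        refine (opNorm_comp_le _ _).trans ?_
        gcongr
        exact (opNorm_comp_le _ _).trans (by gcongr; exact opNorm_comp_le _ _)
    _ ≤ 1 * (1 * (‖T‖ * 1)) := by
        rw [adjoint.norm_map]
        gcongr
    _ = ‖T‖ := by ring

end Hilbert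

theorem lp.ext_single_one {ι 𝕜 F : Type*} [DecidableEq ι] [NormedField 𝕜] [AddCommMonoid F]
    [Module 𝕜 F] [TopologicalSpace F] [T2Space F] {p : ℝ≥0∞} [Fact (1 ≤ p)] (hp : p ≠ ⊤)
    {A B : lp (fun _ : ι => 𝕜) p →L[𝕜] F} (h : ∀ i, A (lp.single p i 1) = B (lp.single p i 1)) :
    A = B :=
  lp.ext_continuousLinearMap hp fun i => ContinuousLinearMap.ext_ring (h i)

theorem lp.apply_single_one_of_apply_eq_mul {ι 𝕜 : Type*} [DecidableEq ι] [NormedField 𝕜]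
    {p : ℝ≥0∞} [Fact (1 ≤ p)] {T : lp (fun _ : ι => 𝕜) p → lp (fun _ : ι => 𝕜) p} {φ : ι → 𝕜}
    (hT : ∀ η i, T η i = φ i * η i) (u : ι) : T (lp.single p u 1) = φ u • lp.single p u 1 := by
  ext i
  rw [hT, lp.coeFn_smul, Pi.smul_apply, smul_eq_mul]
  by_cases h : i = u
  · rw [h]
  · rw [lp.single_apply_ne _ _ _ h, mul_zero, mul_zero]

section OrbitCompression

variable {S X : Type*} [DecidableEq S] {o : S → X}

variable (o) in
/-- The subspace `H₀`, for `o = fun s => σ s x`. -/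
noncomputable def fiberDiffSubspace : Submodule ℂ (lp (fun _ : S => ℂ) 2) :=
  (Submodule.span ℂ {v | ∃ s t, o s = o t ∧ v = lp.single 2 s 1 - lp.single 2 t 1}).topologicalClosure

theorem mapsTo_fiberDiffSubspace {B : lp (fun _ : S => ℂ) 2 →L[ℂ] lp (fun _ : S => ℂ) 2}
    {τ : S → S} {a : S → ℂ} (hτ : ∀ s s', o s = o s' → o (τ s) = o (τ s'))
    (ha : ∀ s s', o s = o s' → a s = a s')
    (hBξ : ∀ u, B (lp.single 2 u 1) = a u • lp.single 2 (τ u) 1) :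
    MapsTo B (fiberDiffSubspace o) (fiberDiffSubspace o) := by
  refine Submodule.mapsTo_topologicalClosure_span B ?_
  rintro _ ⟨s, s', h, rfl⟩
  exact ⟨a s, _, ⟨τ s, τ s', hτ s s' h, rfl⟩, by rw [map_sub, hBξ, hBξ, ha s s' h, smul_sub]⟩

instance : CompleteSpace (fiberDiffSubspace o) :=
  Submodule.topologicalClosure.completeSpace _

variable [DecidableEq X] (K : Submodule ℂ (lp (fun _ : S => ℂ) 2)) [K.HasOrthogonalProjection]
  {W : lp (fun _ : {y : X // ∃ s, o s = y} => ℂ) 2 →L[ℂ] lp (fun _ : S => ℂ) 2}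

theorem sub_starProjection_single_ne_zero (hWiso : ∀ η, ‖W η‖ = ‖η‖)
    (hW : ∀ u, W (lp.single 2 (⟨o u, u, rfl⟩ : {y : X // ∃ s, o s = y}) (1 : ℂ)) =
      ‖lp.single 2 u (1 : ℂ) - K.starProjection (lp.single 2 u 1)‖⁻¹ •
        (lp.single 2 u 1 - K.starProjection (lp.single 2 u 1))) (u : S) :
    lp.single 2 u (1 : ℂ) - K.starProjection (lp.single 2 u 1) ≠ 0 := by
  refine ne_zero_of_map_eq_norm_inv_smul hWiso ?_ (hW u)
  rw [← norm_ne_zero_iff, lp.norm_single (by norm_num)]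
  norm_num

theorem sub_starProjection_single_eq_norm_smul (hWiso : ∀ η, ‖W η‖ = ‖η‖)
    (hW : ∀ u, W (lp.single 2 (⟨o u, u, rfl⟩ : {y : X // ∃ s, o s = y}) (1 : ℂ)) =
      ‖lp.single 2 u (1 : ℂ) - K.starProjection (lp.single 2 u 1)‖⁻¹ •
        (lp.single 2 u 1 - K.starProjection (lp.single 2 u 1))) (u : S) :
    lp.single 2 u (1 : ℂ) - K.starProjection (lp.single 2 u 1) =
      (‖lp.single 2 u (1 : ℂ) - K.starProjection (lp.single 2 u 1)‖ : ℂ) •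
        W (lp.single 2 (⟨o u, u, rfl⟩ : {y : X // ∃ s, o s = y}) (1 : ℂ)) := by
  have hne := norm_ne_zero_iff.2 (sub_starProjection_single_ne_zero K hWiso hW u)
  calc _ = ‖lp.single 2 u (1 : ℂ) - K.starProjection (lp.single 2 u 1)‖ •
        W (lp.single 2 (⟨o u, u, rfl⟩ : {y : X // ∃ s, o s = y}) (1 : ℂ)) := by
        rw [hW, smul_inv_smul₀ hne]
    _ = _ := RCLike.real_smul_eq_coe_smul _ _

theorem adjoint_comp_sub_starProjection_comp_eq_of_single (hWiso : ∀ η, ‖W η‖ = ‖η‖)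
    (hW : ∀ u, W (lp.single 2 (⟨o u, u, rfl⟩ : {y : X // ∃ s, o s = y}) (1 : ℂ)) =
      ‖lp.single 2 u (1 : ℂ) - K.starProjection (lp.single 2 u 1)‖⁻¹ •
        (lp.single 2 u 1 - K.starProjection (lp.single 2 u 1)))
    {B : lp (fun _ : S => ℂ) 2 →L[ℂ] lp (fun _ : S => ℂ) 2} (hB : MapsTo B K K)
    {R : lp (fun _ : {y : X // ∃ s, o s = y} => ℂ) 2 →L[ℂ]
      lp (fun _ : {y : X // ∃ s, o s = y} => ℂ) 2} {τ : S → S} {a : S → ℂ}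
    (hBξ : ∀ u, B (lp.single 2 u 1) = a u • lp.single 2 (τ u) 1)
    (hR : ∀ u, R (lp.single 2 (⟨o u, u, rfl⟩ : {y : X // ∃ s, o s = y}) (1 : ℂ)) =
      (a u * ((‖lp.single 2 (τ u) (1 : ℂ) - K.starProjection (lp.single 2 (τ u) 1)‖ /
        ‖lp.single 2 u (1 : ℂ) - K.starProjection (lp.single 2 u 1)‖ : ℝ) : ℂ)) •
          lp.single 2 (⟨o (τ u), τ u, rfl⟩ : {y : X // ∃ s, o s = y}) (1 : ℂ)) :
    (adjoint W).comp ((ContinuousLinearMap.id ℂ _ - K.starProjection).comp (B.comp W)) = R := by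
  refine lp.ext_single_one (by norm_num) ?_
  rintro ⟨_, u, rfl⟩
  have hWu : W (lp.single 2 (⟨o u, u, rfl⟩ : {y : X // ∃ s, o s = y}) (1 : ℂ)) =
      ((‖lp.single 2 u (1 : ℂ) - K.starProjection (lp.single 2 u 1)‖⁻¹ : ℝ) : ℂ) •
        (lp.single 2 u 1 - K.starProjection (lp.single 2 u 1)) :=
    (hW u).trans (RCLike.real_smul_eq_coe_smul _ _)
  rw [comp_apply, comp_apply, comp_apply, adjoint_apply_sub_starProjection_apply_of_mapsTo K hWiso
    hB hWu (sub_starProjection_single_eq_norm_smul K hWiso hW (τ u)) (hBξ u), hR]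
  congr 1
  push_cast
  ring

end OrbitCompression

theorem orbit_rep_compression_of_left_regular_general
    {S : Type} [AddCancelCommMonoid S] [DecidableEq S]
    {X : Type} [MetricSpace X] [DecidableEq X]
    (σ : S → C(X, X))
    (hσadd : ∀ s t : S, σ (s + t) = (σ s).comp (σ t))
    (x : X)
    -- a character of S
    (γ : S → ℂ)
    -- the action of S on the orbit S(x)
    (στ : S → {y : X // ∃ s : S, (σ s) x = y} → {y : X // ∃ s : S, (σ s) x = y})
    (hστ : ∀ (t : S) (y : {y : X // ∃ s : S, (σ s) x = y}), (στ t y : X) = (σ t) (y : X))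
    -- Q is the orthogonal projection of ℓ²(S) onto H₀
    (Q : lp (fun _ : S => ℂ) 2 →L[ℂ] lp (fun _ : S => ℂ) 2)
    (hQmem : ∀ η : lp (fun _ : S => ℂ) 2,
      Q η ∈ (Submodule.span ℂ {v : lp (fun _ : S => ℂ) 2 | ∃ s t : S,
        (σ s) x = (σ t) x ∧ v = lp.single 2 s (1 : ℂ) - lp.single 2 t (1 : ℂ)}).topologicalClosure)
    (hQorth : ∀ (η : lp (fun _ : S => ℂ) 2),
      ∀ v ∈ (Submodule.span ℂ {v : lp (fun _ : S => ℂ) 2 | ∃ s t : S,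
        (σ s) x = (σ t) x ∧ v = lp.single 2 s (1 : ℂ) - lp.single 2 t (1 : ℂ)}).topologicalClosure,
      inner ℂ (η - Q η) v = (0 : ℂ))
    -- the left regular orbit cocycle
    (μx : S → {y : X // ∃ s : S, (σ s) x = y} → ℝ)
    (hμx : ∀ t u : S,
      μx t ⟨(σ u) x, ⟨u, rfl⟩⟩ =
        ‖lp.single 2 (t + u) (1 : ℂ) - Q (lp.single 2 (t + u) (1 : ℂ))‖ /
          ‖lp.single 2 u (1 : ℂ) - Q (lp.single 2 u (1 : ℂ))‖)
    -- the unitary W : ℓ²(S(x)) → H₀^⊥, viewed as an isometry into ℓ²(S)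
    (W : lp (fun _ : {y : X // ∃ s : S, (σ s) x = y} => ℂ) 2 →L[ℂ] lp (fun _ : S => ℂ) 2)
    (hWiso : ∀ η, ‖W η‖ = ‖η‖)
    (hW : ∀ u : S,
      W (lp.single 2 (⟨(σ u) x, ⟨u, rfl⟩⟩ : {y : X // ∃ s : S, (σ s) x = y}) (1 : ℂ)) =
        ‖lp.single 2 u (1 : ℂ) - Q (lp.single 2 u (1 : ℂ))‖⁻¹ •
          (lp.single 2 u (1 : ℂ) - Q (lp.single 2 u (1 : ℂ))))
    -- the left regular representation π_{x,γ}
    (πf : C(X, ℂ) → (lp (fun _ : S => ℂ) 2 →L[ℂ] lp (fun _ : S => ℂ) 2))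
    (πS : S → (lp (fun _ : S => ℂ) 2 →L[ℂ] lp (fun _ : S => ℂ) 2))
    (hπf : ∀ (f : C(X, ℂ)) (η : lp (fun _ : S => ℂ) 2) (s : S),
      (πf f η) s = f ((σ s) x) * η s)
    (hπS : ∀ (t s : S), πS t (lp.single 2 s (1 : ℂ)) = γ t • lp.single 2 (t + s) (1 : ℂ))
    -- the orbit representation ρ_{x,γμ_x}
    (ρf : C(X, ℂ) →
      (lp (fun _ : {y : X // ∃ s : S, (σ s) x = y} => ℂ) 2 →L[ℂ]
        lp (fun _ : {y : X // ∃ s : S, (σ s) x = y} => ℂ) 2))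
    (ρS : S →
      (lp (fun _ : {y : X // ∃ s : S, (σ s) x = y} => ℂ) 2 →L[ℂ]
        lp (fun _ : {y : X // ∃ s : S, (σ s) x = y} => ℂ) 2))
    (hρf : ∀ (f : C(X, ℂ)) (η : lp (fun _ : {y : X // ∃ s : S, (σ s) x = y} => ℂ) 2)
      (y : {y : X // ∃ s : S, (σ s) x = y}), (ρf f η) y = f (y : X) * η y)
    (hρS : ∀ (t : S) (y : {y : X // ∃ s : S, (σ s) x = y}),
      ρS t (lp.single 2 y (1 : ℂ)) = (γ t * (μx t y : ℂ)) • lp.single 2 (στ t y) (1 : ℂ)) :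
    -- W* Q^⊥ π(S_t) W = ρ(S_t) and W* Q^⊥ π(f) W = ρ(f)
    (∀ t : S,
      (ContinuousLinearMap.adjoint W).comp
        (((ContinuousLinearMap.id ℂ (lp (fun _ : S => ℂ) 2)) - Q).comp ((πS t).comp W)) = ρS t) ∧
    (∀ f : C(X, ℂ),
      (ContinuousLinearMap.adjoint W).comp
        (((ContinuousLinearMap.id ℂ (lp (fun _ : S => ℂ) 2)) - Q).comp ((πf f).comp W)) = ρf f) ∧
    -- the norm inequality
    (∀ (I : Finset S) (f : S → C(X, ℂ)),
      ‖∑ s ∈ I, (ρS s).comp (ρf (f s))‖ ≤ ‖∑ s ∈ I, (πS s).comp (πf (f s))‖) := by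
  set M := fiberDiffSubspace fun s => σ s x
  obtain rfl : Q = M.starProjection := ContinuousLinearMap.ext fun η =>
    (M.eq_starProjection_of_mem_of_inner_eq_zero (hQmem η) (hQorth η)).symm
  have hπf_single := fun g => lp.apply_single_one_of_apply_eq_mul (hπf g)
  have hρf_single := fun g => lp.apply_single_one_of_apply_eq_mul (hρf g)
  have hσ_add_apply (t u : S) : σ (t + u) x = σ t (σ u x) := by
    rw [hσadd, ContinuousMap.comp_apply]
  have hστ_add (t u : S) : στ t ⟨σ u x, u, rfl⟩ = ⟨σ (t + u) x, t + u, rfl⟩ :=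
    Subtype.ext <| (hστ t _).trans (hσ_add_apply t u).symm
  have hπS_maps (t : S) : MapsTo (πS t) M M := mapsTo_fiberDiffSubspace
    (fun s s' h => by rw [hσ_add_apply, hσ_add_apply, h]) (fun _ _ _ => rfl) (hπS t)
  have hπf_maps (g : C(X, ℂ)) : MapsTo (πf g) M M :=
    mapsTo_fiberDiffSubspace (τ := id) (fun _ _ => id) (fun _ _ h => congrArg g h) (hπf_single g)
  have compress {B : lp (fun _ : S => ℂ) 2 →L[ℂ] lp (fun _ : S => ℂ) 2} (hB : MapsTo B M M)
      {R τ a} :=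
    adjoint_comp_sub_starProjection_comp_eq_of_single (o := fun s => σ s x) M hWiso hW hB
      (R := R) (τ := τ) (a := a)
  refine ⟨fun t => compress (hπS_maps t) (hπS t) fun u => by rw [hρS, hστ_add, hμx],
    fun g => compress (hπf_maps g) (hπf_single g) fun u => ?_, fun I f => ?_⟩
  · rw [hρf_single, div_self (norm_ne_zero_iff.2 (sub_starProjection_single_ne_zero M hWiso hW u)),
      Complex.ofReal_one, mul_one]
  have hprod (t : S) (g : C(X, ℂ)) := compress (B := (πS t).comp (πf g))
    ((hπS_maps t).comp (hπf_maps g)) (R := (ρS t).comp (ρf g)) (τ := (t + ·))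
    (a := fun u => g (σ u x) * γ t)
    (fun u => by rw [comp_apply, hπf_single, map_smul, hπS, smul_smul])
    (fun u => by rw [comp_apply, hρf_single, map_smul, hρS, hστ_add, hμx, smul_smul, mul_assoc])
  simp_rw [← hprod]
  rw [← comp_finsetSum, ← comp_finsetSum, ← finsetSum_comp]
  exact norm_adjoint_comp_sub_starProjection_comp_le M hWiso _

/-- `W* Q^⊥ π_{x,γ}(S_t) W = ρ_{x,γμ_x}(S_t)` and
`W* Q^⊥ π_{x,γ}(f) W = ρ_{x,γμ_x}(f)`; consequently the norm of any finite sum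
`∑ ρ(S_s)ρ(f_s)` is dominated by the norm of `∑ π(S_s)π(f_s)`. -/
theorem orbit_rep_compression_of_left_regular
    {S : Type} [AddCancelCommMonoid S] [Countable S] [DecidableEq S]
    {X : Type} [MetricSpace X] [CompactSpace X] [Nonempty X] [DecidableEq X]
    (σ : S → C(X, X))
    (hσ0 : σ 0 = ContinuousMap.id X)
    (hσadd : ∀ s t : S, σ (s + t) = (σ s).comp (σ t))
    (hσsurj : ∀ s : S, Function.Surjective (σ s))
    (x : X)
    (hfin : ∀ y : X, {s : S | (σ s) x = y}.Finite)
    -- a character of S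
    (γ : S → ℂ)
    (hγ0 : γ 0 = 1) (hγadd : ∀ s t : S, γ (s + t) = γ s * γ t)
    (hγabs : ∀ s : S, ‖γ s‖ = 1)
    -- the action of S on the orbit S(x)
    (στ : S → {y : X // ∃ s : S, (σ s) x = y} → {y : X // ∃ s : S, (σ s) x = y})
    (hστ : ∀ (t : S) (y : {y : X // ∃ s : S, (σ s) x = y}), (στ t y : X) = (σ t) (y : X))
    -- Q is the orthogonal projection of ℓ²(S) onto H₀
    (Q : lp (fun _ : S => ℂ) 2 →L[ℂ] lp (fun _ : S => ℂ) 2)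
    (hQmem : ∀ η : lp (fun _ : S => ℂ) 2,
      Q η ∈ (Submodule.span ℂ {v : lp (fun _ : S => ℂ) 2 | ∃ s t : S,
        (σ s) x = (σ t) x ∧ v = lp.single 2 s (1 : ℂ) - lp.single 2 t (1 : ℂ)}).topologicalClosure)
    (hQfix : ∀ η ∈ (Submodule.span ℂ {v : lp (fun _ : S => ℂ) 2 | ∃ s t : S,
        (σ s) x = (σ t) x ∧ v = lp.single 2 s (1 : ℂ) - lp.single 2 t (1 : ℂ)}).topologicalClosure,
      Q η = η)
    (hQorth : ∀ (η : lp (fun _ : S => ℂ) 2),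
      ∀ v ∈ (Submodule.span ℂ {v : lp (fun _ : S => ℂ) 2 | ∃ s t : S,
        (σ s) x = (σ t) x ∧ v = lp.single 2 s (1 : ℂ) - lp.single 2 t (1 : ℂ)}).topologicalClosure,
      inner ℂ (η - Q η) v = (0 : ℂ))
    -- the left regular orbit cocycle
    (μx : S → {y : X // ∃ s : S, (σ s) x = y} → ℝ)
    (hμx : ∀ t u : S,
      μx t ⟨(σ u) x, ⟨u, rfl⟩⟩ =
        ‖lp.single 2 (t + u) (1 : ℂ) - Q (lp.single 2 (t + u) (1 : ℂ))‖ /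
          ‖lp.single 2 u (1 : ℂ) - Q (lp.single 2 u (1 : ℂ))‖)
    -- the unitary W : ℓ²(S(x)) → H₀^⊥, viewed as an isometry into ℓ²(S)
    (W : lp (fun _ : {y : X // ∃ s : S, (σ s) x = y} => ℂ) 2 →L[ℂ] lp (fun _ : S => ℂ) 2)
    (hWiso : ∀ η, ‖W η‖ = ‖η‖)
    (hW : ∀ u : S,
      W (lp.single 2 (⟨(σ u) x, ⟨u, rfl⟩⟩ : {y : X // ∃ s : S, (σ s) x = y}) (1 : ℂ)) =
        ‖lp.single 2 u (1 : ℂ) - Q (lp.single 2 u (1 : ℂ))‖⁻¹ •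
          (lp.single 2 u (1 : ℂ) - Q (lp.single 2 u (1 : ℂ))))
    -- the left regular representation π_{x,γ}
    (πf : C(X, ℂ) → (lp (fun _ : S => ℂ) 2 →L[ℂ] lp (fun _ : S => ℂ) 2))
    (πS : S → (lp (fun _ : S => ℂ) 2 →L[ℂ] lp (fun _ : S => ℂ) 2))
    (hπf : ∀ (f : C(X, ℂ)) (η : lp (fun _ : S => ℂ) 2) (s : S),
      (πf f η) s = f ((σ s) x) * η s)
    (hπS : ∀ (t s : S), πS t (lp.single 2 s (1 : ℂ)) = γ t • lp.single 2 (t + s) (1 : ℂ))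
    -- the orbit representation ρ_{x,γμ_x}
    (ρf : C(X, ℂ) →
      (lp (fun _ : {y : X // ∃ s : S, (σ s) x = y} => ℂ) 2 →L[ℂ]
        lp (fun _ : {y : X // ∃ s : S, (σ s) x = y} => ℂ) 2))
    (ρS : S →
      (lp (fun _ : {y : X // ∃ s : S, (σ s) x = y} => ℂ) 2 →L[ℂ]
        lp (fun _ : {y : X // ∃ s : S, (σ s) x = y} => ℂ) 2))
    (hρf : ∀ (f : C(X, ℂ)) (η : lp (fun _ : {y : X // ∃ s : S, (σ s) x = y} => ℂ) 2)
      (y : {y : X // ∃ s : S, (σ s) x = y}), (ρf f η) y = f (y : X) * η y)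
    (hρS : ∀ (t : S) (y : {y : X // ∃ s : S, (σ s) x = y}),
      ρS t (lp.single 2 y (1 : ℂ)) = (γ t * (μx t y : ℂ)) • lp.single 2 (στ t y) (1 : ℂ)) :
    -- W* Q^⊥ π(S_t) W = ρ(S_t) and W* Q^⊥ π(f) W = ρ(f)
    (∀ t : S,
      (ContinuousLinearMap.adjoint W).comp
        (((ContinuousLinearMap.id ℂ (lp (fun _ : S => ℂ) 2)) - Q).comp ((πS t).comp W)) = ρS t) ∧
    (∀ f : C(X, ℂ),
      (ContinuousLinearMap.adjoint W).comp
        (((ContinuousLinearMap.id ℂ (lp (fun _ : S => ℂ) 2)) - Q).comp ((πf f).comp W)) = ρf f) ∧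
    -- the norm inequality
    (∀ (I : Finset S) (f : S → C(X, ℂ)),
      ‖∑ s ∈ I, (ρS s).comp (ρf (f s))‖ ≤ ‖∑ s ∈ I, (πS s).comp (πf (f s))‖) :=
  orbit_rep_compression_of_left_regular_general σ hσadd x γ στ hστ Q hQmem hQorth μx hμx W hWiso hW
    πf πS hπf hπS ρf ρS hρf hρS
end

section
/- Assume that for every x ∈ X the map s ↦ σ_s(x) is finite-to-one, and for each x let μ_x be the left regular orbit cocycle at x. Let I ⊆ S be a finite set and f_s ∈ C(X) for s ∈ I, with f_{s_0} ≠ 0 for some s_0 ∈ I. Then there exist x ∈ X and a character γ of S such that the bounded operator ∑_{s∈I} ρ_{x, γμ_x}(S_s) ρ_{x, γμ_x}(f_s) on ℓ²(S(x)) is nonzero. -/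
/-!
Evaluate the operator at the basis vector `ξ_x` of a point with `f_{s₀}(x) ≠ 0`. Its coefficient
at `σ_{s₀}(x)` is `∑ γ(s) μ_x(s, x) f_s(x)`, summed over the `s ∈ I` with `σ_s(x) = σ_{s₀}(x)`.
The weights `μ_x(s, x)` are positive: the fibre of `s ↦ σ_s(x)` through `u` is finite, so its
indicator is orthogonal to `H₀` but not to `ξ_u`, whence `Q^⊥ ξ_u ≠ 0`. Circle-valued characters
separate the points of `S` (embed `S` in its Grothendieck group and use `ℚ/ℤ`-valued characters),
so by Dedekind's independence of characters some `γ` makes the coefficient nonzero.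
-/

noncomputable def AddCircle.ratCastHom : AddCircle (1 : ℚ) →+ AddCircle (1 : ℝ) :=
  QuotientAddGroup.map _ _ (Rat.castHom ℝ).toAddMonoidHom <| by
    rintro _ ⟨k, rfl⟩
    exact ⟨k, by simp⟩

lemma AddCircle.ratCastHom_injective : Function.Injective AddCircle.ratCastHom := by
  refine (injective_iff_map_eq_zero _).2 fun a ha => ?_
  induction a using QuotientAddGroup.induction_on with | H q =>
  obtain ⟨n, hn⟩ := (AddCircle.coe_eq_zero_iff (1 : ℝ)).1 ha
  have hn' : (n : ℝ) = q := by simpa using hn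
  have hnq : (n : ℚ) = q := by exact_mod_cast hn'
  exact (AddCircle.coe_eq_zero_iff (1 : ℚ)).2 ⟨n, by simpa using hnq⟩

lemma AddChar.exists_circle_apply_ne {M : Type*} [AddCancelCommMonoid M] {s t : M} (h : s ≠ t) :
    ∃ ψ : AddChar M Circle, ψ s ≠ ψ t := by
  let e := Algebra.GrothendieckAddGroup.of (M := M)
  have hne : e s - e t ≠ 0 := sub_ne_zero.2 <| Algebra.GrothendieckAddGroup.of_injective.ne h
  obtain ⟨c, hc⟩ := CharacterModule.exists_character_apply_ne_zero_of_ne_zero hne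
  let χ := AddCircle.toCircle_addChar.compAddMonoidHom (AddCircle.ratCastHom.comp c)
  refine ⟨χ.compAddMonoidHom e, fun heq => hc ?_⟩
  rw [map_sub, sub_eq_zero]
  exact AddCircle.ratCastHom_injective (AddCircle.injective_toCircle one_ne_zero heq)

lemma AddChar.exists_circle_sum_mul_ne_zero {M : Type*} [AddCancelCommMonoid M] (F : Finset M)
    (c : M → ℂ) {s₀ : M} (hs₀ : s₀ ∈ F) (hc : c s₀ ≠ 0) :
    ∃ ψ : AddChar M Circle, ∑ s ∈ F, (ψ s : ℂ) * c s ≠ 0 := by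
  let ev : M → (AddChar M Circle →* ℂ) := fun s =>
    { toFun := fun ψ => ψ s, map_one' := by simp, map_mul' := by simp }
  have ev_injective : Function.Injective ev := fun s t hst => by
    by_contra h
    obtain ⟨ψ, hψ⟩ := AddChar.exists_circle_apply_ne h
    exact hψ (Circle.coe_injective (DFunLike.congr_fun hst ψ))
  have hli := (linearIndependent_monoidHom (AddChar M Circle) ℂ).comp ev ev_injective
  by_contra! hall
  refine hc (linearIndependent_iff'.1 hli F c (funext fun ψ => ?_) s₀ hs₀)
  simp only [Function.comp_apply, Finset.sum_apply, Pi.smul_apply, smul_eq_mul, Pi.zero_apply]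
  rw [← hall ψ]
  exact Finset.sum_congr rfl fun s _ => mul_comm _ _

lemma lp.single_notMem_topologicalClosure_span_single_sub_single {𝕜 ι κ : Type*} [RCLike 𝕜]
    [DecidableEq ι] (g : ι → κ) {u : ι} (hu : {i | g i = g u}.Finite) :
    lp.single 2 u (1 : 𝕜) ∉ (Submodule.span 𝕜 {v : lp (fun _ : ι => 𝕜) 2 | ∃ s t : ι,
      g s = g t ∧ v = lp.single 2 s 1 - lp.single 2 t 1}).topologicalClosure := by
  set T := hu.toFinset
  set w : lp (fun _ : ι => 𝕜) 2 := ∑ i ∈ T, lp.single 2 i 1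
  have hw : ∀ j, inner 𝕜 w (lp.single 2 j (1 : 𝕜)) = if j ∈ T then 1 else 0 := fun j => by
    simp [w, sum_inner, lp.inner_single_left, lp.single_apply, Pi.single_apply]
  have hker : (Submodule.span 𝕜 {v : lp (fun _ : ι => 𝕜) 2 | ∃ s t : ι,
      g s = g t ∧ v = lp.single 2 s 1 - lp.single 2 t 1}).topologicalClosure ≤
      (innerSL 𝕜 w).ker := by
    refine Submodule.topologicalClosure_minimal _ (Submodule.span_le.2 ?_)
      (ContinuousLinearMap.isClosed_ker _)
    rintro _ ⟨s, t, hst, rfl⟩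
    have hsT : s ∈ T ↔ t ∈ T := by simp [T, hst]
    simp [inner_sub_right, hw, hsT]
  intro hmem
  simpa [hw, T] using hker hmem

lemma lp.apply_single_of_apply_eq_mul {𝕜 ι : Type*} [RCLike 𝕜] [DecidableEq ι] {p : ENNReal}
    {T : lp (fun _ : ι => 𝕜) p → lp (fun _ : ι => 𝕜) p} {m : ι → 𝕜}
    (hT : ∀ η i, T η i = m i * η i) (j : ι) (a : 𝕜) :
    T (lp.single p j a) = m j • lp.single p j a := by
  ext i
  rw [hT, lp.coeFn_smul, Pi.smul_apply, smul_eq_mul]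
  by_cases hij : i = j
  · rw [hij]
  · simp [lp.single_apply, hij]

lemma lp.sum_smul_single_apply {𝕜 ι α : Type*} [RCLike 𝕜] [DecidableEq ι] {p : ENNReal}
    (I : Finset α) (a : α → 𝕜) (y : α → ι) (z : ι) :
    ((∑ s ∈ I, a s • lp.single p (y s) 1 : lp (fun _ : ι => 𝕜) p) : ι → 𝕜) z =
      ∑ s ∈ I with y s = z, a s := by
  rw [lp.coeFn_sum, Finset.sum_apply, Finset.sum_filter]
  refine Finset.sum_congr rfl fun s _ => ?_
  simp [lp.single_apply, Pi.single_apply, eq_comm]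

theorem left_regular_orbit_reps_separate_general
    {S : Type} [AddCancelCommMonoid S] [DecidableEq S]
    {X : Type} [MetricSpace X] [DecidableEq X]
    (σ : S → C(X, X))
    (hσ0 : σ 0 = ContinuousMap.id X)
    -- the maps s ↦ σ_s(x) are finite-to-one
    (hfin : ∀ x y : X, {s : S | (σ s) x = y}.Finite)
    -- the actions of S on the orbits S(x)
    (στ : (x : X) → S → {y : X // ∃ s : S, (σ s) x = y} → {y : X // ∃ s : S, (σ s) x = y})
    (hστ : ∀ (x : X) (t : S) (y : {y : X // ∃ s : S, (σ s) x = y}),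
      (στ x t y : X) = (σ t) (y : X))
    -- for each x, the orthogonal projection of ℓ²(S) onto H₀(x)
    (Q : X → (lp (fun _ : S => ℂ) 2 →L[ℂ] lp (fun _ : S => ℂ) 2))
    (hQmem : ∀ (x : X) (η : lp (fun _ : S => ℂ) 2),
      Q x η ∈ (Submodule.span ℂ {v : lp (fun _ : S => ℂ) 2 | ∃ s t : S,
        (σ s) x = (σ t) x ∧ v = lp.single 2 s (1 : ℂ) - lp.single 2 t (1 : ℂ)}).topologicalClosure)
    -- the left regular orbit cocycles
    (μ : (x : X) → S → {y : X // ∃ s : S, (σ s) x = y} → ℝ)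
    (hμ : ∀ (x : X) (t u : S),
      μ x t ⟨(σ u) x, ⟨u, rfl⟩⟩ =
        ‖lp.single 2 (t + u) (1 : ℂ) - Q x (lp.single 2 (t + u) (1 : ℂ))‖ /
          ‖lp.single 2 u (1 : ℂ) - Q x (lp.single 2 u (1 : ℂ))‖)
    -- the orbit representations ρ_{x, γμ_x}
    (ρf : (x : X) → (S → ℂ) → C(X, ℂ) →
      (lp (fun _ : {y : X // ∃ s : S, (σ s) x = y} => ℂ) 2 →L[ℂ]
        lp (fun _ : {y : X // ∃ s : S, (σ s) x = y} => ℂ) 2))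
    (ρS : (x : X) → (S → ℂ) → S →
      (lp (fun _ : {y : X // ∃ s : S, (σ s) x = y} => ℂ) 2 →L[ℂ]
        lp (fun _ : {y : X // ∃ s : S, (σ s) x = y} => ℂ) 2))
    (hρf : ∀ (x : X) (γ : S → ℂ) (g : C(X, ℂ))
      (η : lp (fun _ : {y : X // ∃ s : S, (σ s) x = y} => ℂ) 2)
      (y : {y : X // ∃ s : S, (σ s) x = y}), (ρf x γ g η) y = g (y : X) * η y)
    (hρS : ∀ (x : X) (γ : S → ℂ) (t : S) (y : {y : X // ∃ s : S, (σ s) x = y}),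
      ρS x γ t (lp.single 2 y (1 : ℂ)) =
        (γ t * (μ x t y : ℂ)) • lp.single 2 (στ x t y) (1 : ℂ))
    -- a finite set of coefficients, not all zero
    (I : Finset S) (f : S → C(X, ℂ)) (s₀ : S) (hs₀ : s₀ ∈ I) (hf : f s₀ ≠ 0) :
    ∃ (x : X) (γ : S → ℂ),
      (γ 0 = 1 ∧ (∀ s t : S, γ (s + t) = γ s * γ t) ∧ (∀ s : S, ‖γ s‖ = 1)) ∧
      (∑ s ∈ I, (ρS x γ s).comp (ρf x γ (f s))) ≠ 0 := by
  obtain ⟨x, hx⟩ : ∃ x, f s₀ x ≠ 0 := by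
    by_contra! h
    exact hf (ContinuousMap.ext h)
  set x₀ : {y : X // ∃ s : S, (σ s) x = y} := ⟨(σ 0) x, 0, rfl⟩
  have hx₀ : (x₀ : X) = x := by simp [x₀, hσ0]
  have hQ : ∀ u, lp.single 2 u (1 : ℂ) - Q x (lp.single 2 u 1) ≠ 0 := fun u h =>
    lp.single_notMem_topologicalClosure_span_single_sub_single (fun s => σ s x) (hfin x _)
      (sub_eq_zero.1 h ▸ hQmem x _)
  have hμpos : ∀ t, 0 < μ x t x₀ := fun t => by
    rw [hμ]
    exact div_pos (norm_pos_iff.2 (hQ _)) (norm_pos_iff.2 (hQ _))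
  obtain ⟨ψ, hψ⟩ := AddChar.exists_circle_sum_mul_ne_zero (I.filter fun s => σ s x = σ s₀ x)
    (fun s => μ x s x₀ * f s x) (Finset.mem_filter.2 ⟨hs₀, rfl⟩)
    (mul_ne_zero (by exact_mod_cast (hμpos s₀).ne') hx)
  refine ⟨x, fun s => ψ s,
    ⟨by simp, fun s t => by simp [AddChar.map_add_eq_mul], fun s => Circle.norm_coe _⟩, fun h => hψ ?_⟩
  have hρf₀ : ∀ s, ρf x (fun s => ψ s) (f s) (lp.single 2 x₀ 1) = f s x • lp.single 2 x₀ 1 :=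
    fun s => by rw [lp.apply_single_of_apply_eq_mul (hρf x _ (f s)), hx₀]
  have hcoord := congr(($h (lp.single 2 x₀ 1) : _ → ℂ) ⟨σ s₀ x, s₀, rfl⟩)
  simp only [sum_apply, ContinuousLinearMap.comp_apply, hρf₀, map_smul, hρS, smul_smul,
    lp.sum_smul_single_apply, zero_apply, lp.coeFn_zero, Pi.zero_apply] at hcoord
  have hfiber : ∀ s, στ x s x₀ = ⟨σ s₀ x, s₀, rfl⟩ ↔ σ s x = σ s₀ x := fun s => by
    rw [Subtype.ext_iff, hστ, hx₀]
  rw [Finset.filter_congr fun s _ => hfiber s] at hcoord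
  exact (Finset.sum_congr rfl fun s _ => by ring).trans hcoord

/-- the orbit representations associated to the left regular orbit cocycles
(twisted by characters) separate the elements of the algebra of finite sums `∑ S_s f_s`. -/
theorem left_regular_orbit_reps_separate
    {S : Type} [AddCancelCommMonoid S] [Countable S] [DecidableEq S]
    {X : Type} [MetricSpace X] [CompactSpace X] [Nonempty X] [DecidableEq X]
    (σ : S → C(X, X))
    (hσ0 : σ 0 = ContinuousMap.id X)
    (hσadd : ∀ s t : S, σ (s + t) = (σ s).comp (σ t))
    (hσsurj : ∀ s : S, Function.Surjective (σ s))
    -- the maps s ↦ σ_s(x) are finite-to-one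
    (hfin : ∀ x y : X, {s : S | (σ s) x = y}.Finite)
    -- the actions of S on the orbits S(x)
    (στ : (x : X) → S → {y : X // ∃ s : S, (σ s) x = y} → {y : X // ∃ s : S, (σ s) x = y})
    (hστ : ∀ (x : X) (t : S) (y : {y : X // ∃ s : S, (σ s) x = y}),
      (στ x t y : X) = (σ t) (y : X))
    -- for each x, the orthogonal projection of ℓ²(S) onto H₀(x)
    (Q : X → (lp (fun _ : S => ℂ) 2 →L[ℂ] lp (fun _ : S => ℂ) 2))
    (hQmem : ∀ (x : X) (η : lp (fun _ : S => ℂ) 2),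
      Q x η ∈ (Submodule.span ℂ {v : lp (fun _ : S => ℂ) 2 | ∃ s t : S,
        (σ s) x = (σ t) x ∧ v = lp.single 2 s (1 : ℂ) - lp.single 2 t (1 : ℂ)}).topologicalClosure)
    (hQfix : ∀ (x : X), ∀ η ∈ (Submodule.span ℂ {v : lp (fun _ : S => ℂ) 2 | ∃ s t : S,
        (σ s) x = (σ t) x ∧ v = lp.single 2 s (1 : ℂ) - lp.single 2 t (1 : ℂ)}).topologicalClosure,
      Q x η = η)
    (hQorth : ∀ (x : X) (η : lp (fun _ : S => ℂ) 2),
      ∀ v ∈ (Submodule.span ℂ {v : lp (fun _ : S => ℂ) 2 | ∃ s t : S,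
        (σ s) x = (σ t) x ∧ v = lp.single 2 s (1 : ℂ) - lp.single 2 t (1 : ℂ)}).topologicalClosure,
      inner ℂ (η - Q x η) v = (0 : ℂ))
    -- the left regular orbit cocycles
    (μ : (x : X) → S → {y : X // ∃ s : S, (σ s) x = y} → ℝ)
    (hμ : ∀ (x : X) (t u : S),
      μ x t ⟨(σ u) x, ⟨u, rfl⟩⟩ =
        ‖lp.single 2 (t + u) (1 : ℂ) - Q x (lp.single 2 (t + u) (1 : ℂ))‖ /
          ‖lp.single 2 u (1 : ℂ) - Q x (lp.single 2 u (1 : ℂ))‖)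
    -- the orbit representations ρ_{x, γμ_x}
    (ρf : (x : X) → (S → ℂ) → C(X, ℂ) →
      (lp (fun _ : {y : X // ∃ s : S, (σ s) x = y} => ℂ) 2 →L[ℂ]
        lp (fun _ : {y : X // ∃ s : S, (σ s) x = y} => ℂ) 2))
    (ρS : (x : X) → (S → ℂ) → S →
      (lp (fun _ : {y : X // ∃ s : S, (σ s) x = y} => ℂ) 2 →L[ℂ]
        lp (fun _ : {y : X // ∃ s : S, (σ s) x = y} => ℂ) 2))
    (hρf : ∀ (x : X) (γ : S → ℂ) (g : C(X, ℂ))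
      (η : lp (fun _ : {y : X // ∃ s : S, (σ s) x = y} => ℂ) 2)
      (y : {y : X // ∃ s : S, (σ s) x = y}), (ρf x γ g η) y = g (y : X) * η y)
    (hρS : ∀ (x : X) (γ : S → ℂ) (t : S) (y : {y : X // ∃ s : S, (σ s) x = y}),
      ρS x γ t (lp.single 2 y (1 : ℂ)) =
        (γ t * (μ x t y : ℂ)) • lp.single 2 (στ x t y) (1 : ℂ))
    -- a finite set of coefficients, not all zero
    (I : Finset S) (f : S → C(X, ℂ)) (s₀ : S) (hs₀ : s₀ ∈ I) (hf : f s₀ ≠ 0) :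
    ∃ (x : X) (γ : S → ℂ),
      (γ 0 = 1 ∧ (∀ s t : S, γ (s + t) = γ s * γ t) ∧ (∀ s : S, ‖γ s‖ = 1)) ∧
      (∑ s ∈ I, (ρS x γ s).comp (ρf x γ (f s))) ≠ 0 :=
  left_regular_orbit_reps_separate_general σ hσ0 hfin στ hστ Q hQmem μ hμ ρf ρS hρf hρS I f s₀ hs₀
    hf
end

section
/- The canonical homeomorphism extension (X̃, σ̃, S) of (X, σ, S) is minimal in the following sense: suppose Z is a compact metric space, φ_t : Z → Z are homeomorphisms with φ_0 = id_Z and φ_{s+t} = φ_s ∘ φ_t for all s, t ∈ S, and π₁ : X̃ → Z and π₂ : Z → X are continuous surjections satisfying π₁ ∘ σ̃_t = φ_t ∘ π₁ and π₂ ∘ φ_t = σ_t ∘ π₂ for all t ∈ S, and π₂ ∘ π₁ = p. Then π₁ is a homeomorphism. -/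
/-- The canonical extension space `X̃ ⊆ X^G`. -/
def canonicalExt {S X G : Type} [TopologicalSpace X] [Add G]
    (σ : S → C(X, X)) (i : S → G) : Set (G → X) :=
  {x : G → X | ∀ (g h : G) (u : S), g = h + i u → x h = (σ u) (x g)}

/-- the canonical homeomorphism extension `(X̃, σ̃, S)` of `(X, σ, S)` is
minimal: any intermediate homeomorphism extension `(Z, φ, S)` is conjugate to it. -/
theorem canonical_ext_minimal
    {S : Type} [AddCancelCommMonoid S] [Countable S]
    {X : Type} [MetricSpace X] [CompactSpace X] [Nonempty X]
    (σ : S → C(X, X))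
    (hσ0 : σ 0 = ContinuousMap.id X)
    (hσadd : ∀ s t : S, σ (s + t) = (σ s).comp (σ t))
    (hσsurj : ∀ s : S, Function.Surjective (σ s))
    -- the enveloping group G = S - S
    {G : Type} [AddCommGroup G]
    (i : S → G) (hi0 : i 0 = 0) (hiadd : ∀ s t : S, i (s + t) = i s + i t)
    (hiinj : Function.Injective i)
    (hgen : ∀ g : G, ∃ s t : S, g = i s - i t)
    -- the homeomorphisms σ̃_t of X̃ for t ∈ S
    (σt : S → (canonicalExt σ i) → (canonicalExt σ i))
    (hσt : ∀ (t : S) (x : canonicalExt σ i) (g : G),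
      ((σt t) x : G → X) g = (σ t) ((x : G → X) g))
    -- an intermediate system (Z, φ, S)
    {Z : Type} [MetricSpace Z] [CompactSpace Z]
    (φ : S → Z → Z)
    (hφhomeo : ∀ t : S, IsHomeomorph (φ t))
    (hφ0 : φ 0 = id)
    (hφadd : ∀ s t : S, φ (s + t) = φ s ∘ φ t)
    (π₁ : (canonicalExt σ i) → Z) (π₂ : Z → X)
    (hπ₁c : Continuous π₁) (hπ₁s : Function.Surjective π₁)
    (hπ₂c : Continuous π₂) (hπ₂s : Function.Surjective π₂)
    (hπ₁int : ∀ (t : S) (x : canonicalExt σ i), π₁ (σt t x) = φ t (π₁ x))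
    (hπ₂int : ∀ (t : S) (z : Z), π₂ (φ t z) = (σ t) (π₂ z))
    (hfact : ∀ x : canonicalExt σ i, π₂ (π₁ x) = (x : G → X) 0) :
    IsHomeomorph π₁ := by

  -- X̃ is compact (closed subset of the compact product X^G)
  have hclosed : IsClosed (canonicalExt σ i) := by
    have heq : canonicalExt σ i = ⋂ (g : G) (h : G) (u : S) (_ : g = h + i u),
        {x : G → X | x h = (σ u) (x g)} := by
      ext x
      simp only [canonicalExt, Set.mem_setOf_eq, Set.mem_iInter]
    rw [heq]
    refine isClosed_iInter fun g => isClosed_iInter fun h => isClosed_iInter fun u =>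
      isClosed_iInter fun _ => ?_
    exact isClosed_eq (continuous_apply h) ((σ u).continuous.comp (continuous_apply g))
  haveI : CompactSpace (canonicalExt σ i) := isCompact_iff_compactSpace.mp hclosed.isCompact
  -- π₁ is injective
  have hinj : Function.Injective π₁ := by
    intro x y hxy
    have key : ∀ s : S, (x : G → X) (i s) = (y : G → X) (i s) := by
      intro s
      have mk : ∀ z : canonicalExt σ i, ∃ z' : canonicalExt σ i,
          σt s z' = z ∧ (z' : G → X) 0 = (z : G → X) (i s) := by
        intro z
        refine ⟨⟨fun g => (z : G → X) (g + i s), ?_⟩, ?_, ?_⟩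
        · intro g h u hgh
          exact z.2 (g + i s) (h + i s) u (by rw [hgh]; abel)
        · apply Subtype.ext; funext g
          rw [hσt]
          exact (z.2 (g + i s) g s rfl).symm
        · show (z : G → X) (0 + i s) = (z : G → X) (i s)
          rw [zero_add]
      obtain ⟨x', hx', hx0⟩ := mk x
      obtain ⟨y', hy', hy0⟩ := mk y
      have heq : φ s (π₁ x') = φ s (π₁ y') := by
        rw [← hπ₁int, ← hπ₁int, hx', hy', hxy]
      have heq2 : π₁ x' = π₁ y' := (hφhomeo s).injective heq
      calc (x : G → X) (i s) = (x' : G → X) 0 := hx0.symm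
        _ = π₂ (π₁ x') := (hfact x').symm
        _ = π₂ (π₁ y') := by rw [heq2]
        _ = (y : G → X) (i s) := by rw [hfact y', hy0]
    apply Subtype.ext; funext g
    obtain ⟨s, t, rfl⟩ := hgen g
    have hx := x.2 (i s) (i s - i t) t (by abel)
    have hy := y.2 (i s) (i s - i t) t (by abel)
    rw [hx, hy, key s]
  -- continuous bijection from compact to T2 is a homeomorphism
  exact (Continuous.homeoOfEquivCompactToT2
    (f := Equiv.ofBijective π₁ ⟨hinj, hπ₁s⟩) hπ₁c).isHomeomorph
end

section
/- The dynamical system (X, σ, S) has a minimal homeomorphism extension: there exist a nonempty compact metric space Y, an action β of S on Y by homeomorphisms (β_0 = id_Y, β_{s+t} = β_s ∘ β_t), and a continuous surjection r : Y → X with r ∘ β_t = σ_t ∘ r for all t ∈ S, such that whenever Z is a compact metric space with an action φ of S on Z by homeomorphisms and there are continuous surjections π₁ : Y → Z, π₂ : Z → X with π₁ ∘ β_t = φ_t ∘ π₁, π₂ ∘ φ_t = σ_t ∘ π₂ for all t ∈ S, and π₂ ∘ π₁ = r, the map π₁ is a homeomorphism. -/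
/-- Key existence lemma: full orbits through any point exist, by a compactness argument. -/
lemma natext_exists
    {S : Type} [AddCancelCommMonoid S] [Countable S]
    {X : Type} [MetricSpace X] [CompactSpace X] [Nonempty X]
    (σ : S → C(X, X))
    (hσadd : ∀ s t : S, σ (s + t) = (σ s).comp (σ t))
    (hσsurj : ∀ s : S, Function.Surjective (σ s))
    (x : X) : ∃ y : S → X, (∀ s t : S, σ t (y (s + t)) = y s) ∧ y 0 = x := by
  classical
  -- for each finite set of constraints, the set of partial solutions
  set C : Finset (S × S) → Set (S → X) := fun P =>
    {y | y 0 = x} ∩ ⋂ p ∈ P, {y | σ p.2 (y (p.1 + p.2)) = y p.1} with hC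
  have hclosed : ∀ P, IsClosed (C P) := by
    intro P
    refine IsClosed.inter (isClosed_eq (continuous_apply 0) continuous_const) ?_
    exact isClosed_biInter fun p _ =>
      isClosed_eq ((σ p.2).continuous.comp (continuous_apply _)) (continuous_apply _)
  have hmem : ∀ P y, y ∈ C P ↔ y 0 = x ∧ ∀ p ∈ P, σ p.2 (y (p.1 + p.2)) = y p.1 := by
    intro P y
    simp [hC, Set.mem_iInter]
  have hne : ∀ P, (C P).Nonempty := by
    intro P
    set F : Finset S := insert 0 (P.image Prod.fst ∪ P.image fun p => p.1 + p.2) with hF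
    set m : S := ∑ v ∈ F, v with hm
    obtain ⟨w, hw⟩ := hσsurj m x
    refine ⟨fun u => if h : u ∈ F then σ (∑ v ∈ F.erase u, v) w else Classical.arbitrary X,
      (hmem P _).2 ⟨?_, ?_⟩⟩
    · have h0 : (0 : S) ∈ F := Finset.mem_insert_self _ _
      simp only [dif_pos h0]
      have : (0 : S) + ∑ v ∈ F.erase 0, v = m := Finset.add_sum_erase F id h0
      rw [zero_add] at this
      rw [this, hw]
    · intro p hp
      have hs : p.1 ∈ F := by
        refine Finset.mem_insert_of_mem (Finset.mem_union_left _ ?_)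
        exact Finset.mem_image_of_mem _ hp
      have hst : p.1 + p.2 ∈ F := by
        refine Finset.mem_insert_of_mem (Finset.mem_union_right _ ?_)
        exact Finset.mem_image_of_mem (fun p => p.1 + p.2) hp
      simp only [dif_pos hs, dif_pos hst]
      have key : p.2 + ∑ v ∈ F.erase (p.1 + p.2), v = ∑ v ∈ F.erase p.1, v := by
        have h1 : (p.1 + p.2) + ∑ v ∈ F.erase (p.1 + p.2), v = m :=
          Finset.add_sum_erase F id hst
        have h2 : p.1 + ∑ v ∈ F.erase p.1, v = m := Finset.add_sum_erase F id hs
        have : p.1 + (p.2 + ∑ v ∈ F.erase (p.1 + p.2), v)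
            = p.1 + ∑ v ∈ F.erase p.1, v := by
          rw [← add_assoc, h1, h2]
        exact add_left_cancel this
      calc σ p.2 (σ (∑ v ∈ F.erase (p.1 + p.2), v) w)
          = σ (p.2 + ∑ v ∈ F.erase (p.1 + p.2), v) w :=
            (DFunLike.congr_fun (hσadd p.2 _) w).symm
        _ = σ (∑ v ∈ F.erase p.1, v) w := by rw [key]
  have hdir : Directed (· ⊇ ·) C := by
    intro P Q
    refine ⟨P ∪ Q, ?_, ?_⟩
    · intro y hy
      rw [hmem] at hy ⊢
      exact ⟨hy.1, fun p hp => hy.2 p (Finset.mem_union_left _ hp)⟩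
    · intro y hy
      rw [hmem] at hy ⊢
      exact ⟨hy.1, fun p hp => hy.2 p (Finset.mem_union_right _ hp)⟩
  have hcpt : ∀ P, IsCompact (C P) := fun P => (hclosed P).isCompact
  obtain ⟨y, hy⟩ := IsCompact.nonempty_iInter_of_directed_nonempty_isCompact_isClosed
    C hdir hne hcpt hclosed
  refine ⟨y, ?_, ?_⟩
  · intro s t
    have := (hmem {(s, t)} y).1 (Set.mem_iInter.mp hy {(s, t)})
    exact this.2 (s, t) (Finset.mem_singleton_self _)
  · exact ((hmem ∅ y).1 (Set.mem_iInter.mp hy ∅)).1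

/-- the dynamical system `(X, σ, S)` has a minimal homeomorphism extension. -/
theorem exists_minimal_homeo_extension
    {S : Type} [AddCancelCommMonoid S] [Countable S]
    {X : Type} [MetricSpace X] [CompactSpace X] [Nonempty X]
    (σ : S → C(X, X))
    (hσ0 : σ 0 = ContinuousMap.id X)
    (hσadd : ∀ s t : S, σ (s + t) = (σ s).comp (σ t))
    (hσsurj : ∀ s : S, Function.Surjective (σ s)) :
    ∃ (Y : Type) (_ : MetricSpace Y), Nonempty Y ∧ CompactSpace Y ∧
      ∃ (β : S → Y → Y) (r : Y → X),
        -- (Y, β, S) is an action by homeomorphisms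
        (∀ t : S, IsHomeomorph (β t)) ∧
        β 0 = id ∧
        (∀ s t : S, β (s + t) = β s ∘ β t) ∧
        -- r is a continuous surjection intertwining β and σ
        Continuous r ∧
        Function.Surjective r ∧
        (∀ t : S, r ∘ β t = ⇑(σ t) ∘ r) ∧
        -- minimality
        (∀ (Z : Type) [MetricSpace Z] [CompactSpace Z]
          (φ : S → Z → Z) (π₁ : Y → Z) (π₂ : Z → X),
          (∀ t : S, IsHomeomorph (φ t)) →
          φ 0 = id →
          (∀ s t : S, φ (s + t) = φ s ∘ φ t) →
          Continuous π₁ → Function.Surjective π₁ →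
          Continuous π₂ → Function.Surjective π₂ →
          (∀ t : S, π₁ ∘ β t = φ t ∘ π₁) →
          (∀ t : S, π₂ ∘ φ t = ⇑(σ t) ∘ π₂) →
          π₂ ∘ π₁ = r →
          IsHomeomorph π₁) := by
  classical
  have comp_apply : ∀ (a b : S) (z : X), σ a (σ b z) = σ (a + b) z := fun a b z =>
    (DFunLike.congr_fun (hσadd a b) z).symm
  -- the natural extension as a closed subset of the product space
  set Yset : Set (S → X) := {y | ∀ s t : S, σ t (y (s + t)) = y s} with hYset
  have hYmem : ∀ y : S → X, y ∈ Yset ↔ ∀ s t : S, σ t (y (s + t)) = y s := fun y => Iff.rfl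
  have hYclosed : IsClosed Yset := by
    have : Yset = ⋂ s, ⋂ t, {y : S → X | σ t (y (s + t)) = y s} := by
      ext y; simp [hYset, Set.mem_iInter]
    rw [this]
    exact isClosed_iInter fun s => isClosed_iInter fun t =>
      isClosed_eq ((σ t).continuous.comp (continuous_apply _)) (continuous_apply _)
  haveI : Nonempty Yset := by
    obtain ⟨y, hy, _⟩ := natext_exists σ hσadd hσsurj (Classical.arbitrary X)
    exact ⟨⟨y, hy⟩⟩
  haveI : CompactSpace Yset := isCompact_iff_compactSpace.mp hYclosed.isCompact
  letI : MetricSpace Yset := TopologicalSpace.metrizableSpaceMetric Yset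
  -- the action and its inverse
  have memβ : ∀ (t : S) (y : Yset), (fun s => σ t (y.1 s)) ∈ Yset := by
    intro t y s u
    have h1 : σ u (σ t (y.1 (s + u))) = σ t (σ u (y.1 (s + u))) := by
      rw [comp_apply, comp_apply, add_comm]
    rw [h1, y.2 (s : S) u]
  have memγ : ∀ (t : S) (y : Yset), (fun s => y.1 (s + t)) ∈ Yset := by
    intro t y s u
    show σ u (y.1 (s + u + t)) = y.1 (s + t)
    have h : s + u + t = (s + t) + u := by abel
    rw [h]
    exact y.2 (s + t) u
  set β : S → Yset → Yset := fun t y => ⟨fun s => σ t (y.1 s), memβ t y⟩ with hβdef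
  set γ : S → Yset → Yset := fun t y => ⟨fun s => y.1 (s + t), memγ t y⟩ with hγdef
  have hβγ : ∀ t (y : Yset), β t (γ t y) = y := by
    intro t y
    apply Subtype.ext; funext s
    exact y.2 s t
  have hγβ : ∀ t (y : Yset), γ t (β t y) = y := by
    intro t y
    apply Subtype.ext; funext s
    exact y.2 s t
  have hβcont : ∀ t, Continuous (β t) := by
    intro t
    apply Continuous.subtype_mk
    exact continuous_pi fun s => (σ t).continuous.comp
      ((continuous_apply s).comp continuous_subtype_val)
  have hγcont : ∀ t, Continuous (γ t) := by
    intro t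
    apply Continuous.subtype_mk
    exact continuous_pi fun s => (continuous_apply (s + t)).comp continuous_subtype_val
  have hβhomeo : ∀ t, IsHomeomorph (β t) := by
    intro t
    let e : Homeomorph Yset Yset :=
      { toFun := β t
        invFun := γ t
        left_inv := hγβ t
        right_inv := hβγ t
        continuous_toFun := hβcont t
        continuous_invFun := hγcont t }
    exact e.isHomeomorph
  set r : Yset → X := fun y => y.1 0 with hrdef
  refine ⟨Yset, inferInstance, inferInstance, inferInstance, β, r,
    hβhomeo, ?_, ?_, ?_, ?_, ?_, ?_⟩
  · -- β 0 = id
    funext y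
    apply Subtype.ext; funext s
    show σ 0 (y.1 s) = y.1 s
    rw [hσ0]; rfl
  · -- β (s+t) = β s ∘ β t
    intro s t
    funext y
    apply Subtype.ext; funext u
    show σ (s + t) (y.1 u) = σ s (σ t (y.1 u))
    rw [comp_apply]
  · -- Continuous r
    exact (continuous_apply 0).comp continuous_subtype_val
  · -- Surjective r
    intro x
    obtain ⟨y, hy, hy0⟩ := natext_exists σ hσadd hσsurj x
    exact ⟨⟨y, hy⟩, hy0⟩
  · -- intertwining
    intro t
    funext y
    rfl
  · -- minimality
    intro Z _ _ φ π₁ π₂ hφhomeo hφ0 hφadd hπ₁c hπ₁s hπ₂c hπ₂s hint₁ hint₂ hcomp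
    have hinj : Function.Injective π₁ := by
      intro a b hab
      apply Subtype.ext; funext s
      have hγ1 : ∀ y : Yset, φ s (π₁ (γ s y)) = π₁ y := by
        intro y
        have h := congrFun (hint₁ s) (γ s y)
        simp only [Function.comp_apply] at h
        rw [hβγ s y] at h
        exact h.symm
      have h1 : π₁ (γ s a) = π₁ (γ s b) := by
        apply (hφhomeo s).bijective.injective
        rw [hγ1 a, hγ1 b, hab]
      have hval : ∀ y : Yset, π₂ (π₁ (γ s y)) = y.1 s := by
        intro y
        have h := congrFun hcomp (γ s y)
        simp only [Function.comp_apply] at h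
        have h0 : r (γ s y) = y.1 s := by
          show y.1 (0 + s) = y.1 s
          rw [zero_add]
        exact h.trans h0
      rw [← hval a, ← hval b, h1]
    have hbij : Function.Bijective π₁ := ⟨hinj, hπ₁s⟩
    let e : Homeomorph Yset Z := Continuous.homeoOfEquivCompactToT2
      (f := Equiv.ofBijective π₁ hbij) hπ₁c
    have : ⇑e = π₁ := rfl
    rw [← this]
    exact e.isHomeomorph
end

section
/- Fix x ∈ X with the map s ↦ σ_s(x) finite-to-one, let μ_x be the left regular orbit cocycle at x, and let γ be a character of S. Then the commuting contractions ρ_{x,γμ_x}(S_s) (s ∈ S) dilate to a commuting group of unitaries: there exist a complex Hilbert space K, a linear isometry V : ℓ²(S(x)) → K, and a group homomorphism U from G into the unitary group of K such that ρ_{x,γμ_x}(S_s) = V* ∘ U(i(s)) ∘ V for all s ∈ S. -/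
/-!
The dilation lives on `ℓ²(G)`. Because the fibres `C_y = {s | σ_s x = y}` are finite, `Q^⊥ ξ_u`
is the average of the `ξ_t` over the fibre of `u`, so `‖Q^⊥ ξ_u‖ = |C_{σ_u x}|^{-1/2}` and
`μ_x(s, y) = √|C_y| / √|C_{σ_s y}|`. The normalised indicators `e_y = |C_y|^{-1/2} 1_{i(C_y)}` are
orthonormal in `ℓ²(G)`, and `i(s) + i(C_y) ⊆ i(C_{σ_s y})`, so for the regular representation
`U_g ξ_h = χ(g) ξ_{g+h}` twisted by the extension `χ` of `γ` to `G` one gets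
`⟪e_z, U_{i(s)} e_y⟫ = γ(s) μ_x(s, y) δ_{z, σ_s y}`; hence `V ξ_y = e_y` dilates `ρ`.
-/

open Finset Function
open scoped InnerProductSpace

noncomputable section

namespace OrbitDilation

local notation "ℓ²(" ι ")" => lp (fun _ : ι => ℂ) 2

section Lp

variable {ι : Type*} [DecidableEq ι]

theorem clm_ext_single {E : Type*} [NormedAddCommGroup E] [NormedSpace ℂ E]
    {A B : ℓ²(ι) →L[ℂ] E} (h : ∀ i, A (lp.single 2 i 1) = B (lp.single 2 i 1)) : A = B :=
  lp.ext_continuousLinearMap ENNReal.ofNat_ne_top fun i => ContinuousLinearMap.ext_ring (h i)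

theorem inner_single_one_left (i : ι) (w : ℓ²(ι)) : ⟪lp.single 2 i (1 : ℂ), w⟫_ℂ = w i := by
  simp [lp.inner_single_left]

def indicatorVec (A : Finset ι) : ℓ²(ι) := ∑ g ∈ A, lp.single 2 g 1

theorem indicatorVec_apply (A : Finset ι) (j : ι) :
    indicatorVec A j = if j ∈ A then 1 else 0 := by
  rw [indicatorVec, lp.coeFn_sum, Finset.sum_apply]
  simp [Pi.single_apply]

theorem inner_indicatorVec_left (A : Finset ι) (w : ℓ²(ι)) :
    ⟪indicatorVec A, w⟫_ℂ = ∑ g ∈ A, w g := by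
  simp [indicatorVec, inner_single_one_left]

theorem inner_indicatorVec (A B : Finset ι) :
    ⟪indicatorVec A, indicatorVec B⟫_ℂ = #(A ∩ B) := by
  simp [inner_indicatorVec_left, indicatorVec_apply, Finset.sum_ite_mem]

theorem norm_indicatorVec (A : Finset ι) : ‖indicatorVec A‖ = √(#A : ℝ) := by
  rw [norm_eq_sqrt_re_inner (𝕜 := ℂ), inner_indicatorVec, inter_self]
  simp

def unitIndicator (A : Finset ι) : ℓ²(ι) := ((√(#A : ℝ) : ℂ))⁻¹ • indicatorVec A

theorem inner_unitIndicator (A B : Finset ι) :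
    ⟪unitIndicator A, unitIndicator B⟫_ℂ = ((#(A ∩ B) / (√(#A : ℝ) * √(#B : ℝ)) : ℝ) : ℂ) := by
  simp only [unitIndicator, inner_smul_left, inner_smul_right, inner_indicatorVec, map_inv₀,
    Complex.conj_ofReal]
  push_cast
  ring

theorem orthonormal_unitIndicator {κ : Type*} {F : κ → Finset ι} (hne : ∀ y, (F y).Nonempty)
    (hdisj : Pairwise (Disjoint on F)) : Orthonormal ℂ fun y => unitIndicator (F y) := by
  classical
  rw [orthonormal_iff_ite]
  intro y z
  split_ifs with h
  · subst h
    have : (0 : ℝ) < #(F y) := by exact_mod_cast (hne y).card_pos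
    rw [inner_unitIndicator, inter_self, Real.mul_self_sqrt this.le, div_self this.ne',
      Complex.ofReal_one]
  · rw [inner_unitIndicator, disjoint_iff_inter_eq_empty.1 (hdisj h)]
    simp

variable {E : Type*} [NormedAddCommGroup E] [InnerProductSpace ℂ E] [CompleteSpace E]
  {e : ι → E} (he : Orthonormal ℂ e)

def orthonormalIsometry : ℓ²(ι) →ₗᵢ[ℂ] E :=
  he.orthogonalFamily.linearIsometry

theorem orthonormalIsometry_single (i : ι) (a : ℂ) :
    orthonormalIsometry he (lp.single 2 i a) = a • e i :=
  he.orthogonalFamily.linearIsometry_apply_single a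

theorem adjoint_orthonormalIsometry_apply (w : E) (j : ι) :
    (ContinuousLinearMap.adjoint (orthonormalIsometry he).toContinuousLinearMap w) j =
      ⟪e j, w⟫_ℂ := by
  rw [← inner_single_one_left, ContinuousLinearMap.adjoint_inner_right,
    LinearIsometry.coe_toContinuousLinearMap, orthonormalIsometry_single, one_smul]

def indicatorIsometry {κ : Type*} {F : κ → Finset ι} (hne : ∀ y, (F y).Nonempty)
    (hdisj : Pairwise (Disjoint on F)) : ℓ²(κ) →L[ℂ] ℓ²(ι) :=
  (orthonormalIsometry (orthonormal_unitIndicator hne hdisj)).toContinuousLinearMap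

theorem norm_indicatorIsometry {κ : Type*} {F : κ → Finset ι} (hne : ∀ y, (F y).Nonempty)
    (hdisj : Pairwise (Disjoint on F)) (η : ℓ²(κ)) : ‖indicatorIsometry hne hdisj η‖ = ‖η‖ :=
  LinearIsometry.norm_map _ η

end Lp

section TwistedShift

variable {G : Type*} [AddGroup G] [DecidableEq G] (χ : AddChar G ℂ)

theorem orthonormal_twisted_translate (hχ : ∀ g, ‖χ g‖ = 1) (g : G) :
    Orthonormal ℂ fun h : G => χ g • (lp.single 2 (g + h) 1 : ℓ²(G)) := by
  rw [orthonormal_iff_ite]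
  intro h k
  simp only [inner_smul_left, inner_smul_right, inner_single_one_left, lp.single_apply,
    Pi.single_apply, add_right_inj]
  split_ifs
  · rw [mul_one, Complex.mul_conj, Complex.normSq_eq_norm_sq, hχ]; simp
  · simp

variable (hχ : ∀ g, ‖χ g‖ = 1)

def twistedShift (g : G) : ℓ²(G) →L[ℂ] ℓ²(G) :=
  (orthonormalIsometry (orthonormal_twisted_translate χ hχ g)).toContinuousLinearMap

theorem twistedShift_single (g h : G) (a : ℂ) :
    twistedShift χ hχ g (lp.single 2 h a) = (a * χ g) • lp.single 2 (g + h) 1 := by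
  rw [twistedShift, LinearIsometry.coe_toContinuousLinearMap, orthonormalIsometry_single,
    smul_smul]

theorem inner_twistedShift (g : G) (v w : ℓ²(G)) :
    ⟪twistedShift χ hχ g v, twistedShift χ hχ g w⟫_ℂ = ⟪v, w⟫_ℂ :=
  LinearIsometry.inner_map_map _ v w

theorem twistedShift_zero : twistedShift χ hχ 0 = ContinuousLinearMap.id ℂ ℓ²(G) :=
  clm_ext_single fun h => by simp [twistedShift_single]

theorem twistedShift_add (g h : G) :
    twistedShift χ hχ (g + h) = (twistedShift χ hχ g).comp (twistedShift χ hχ h) :=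
  clm_ext_single fun k => by
    simp only [ContinuousLinearMap.comp_apply, twistedShift_single, map_smul, smul_smul,
      AddChar.map_add_eq_mul, add_assoc, one_mul, mul_comm]

theorem adjoint_twistedShift (g : G) :
    ContinuousLinearMap.adjoint (twistedShift χ hχ g) = twistedShift χ hχ (-g) := by
  refine ((ContinuousLinearMap.eq_adjoint_iff _ _).2 fun v w => ?_).symm
  conv_lhs => rw [← ContinuousLinearMap.id_apply (R₁ := ℂ) w, ← twistedShift_zero χ hχ,
    ← neg_add_cancel g, twistedShift_add, ContinuousLinearMap.comp_apply, inner_twistedShift]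

theorem twistedShift_comp_adjoint (g : G) :
    (twistedShift χ hχ g).comp (ContinuousLinearMap.adjoint (twistedShift χ hχ g)) =
      ContinuousLinearMap.id ℂ ℓ²(G) := by
  rw [adjoint_twistedShift, ← twistedShift_add, add_neg_cancel, twistedShift_zero]

theorem adjoint_comp_twistedShift (g : G) :
    (ContinuousLinearMap.adjoint (twistedShift χ hχ g)).comp (twistedShift χ hχ g) =
      ContinuousLinearMap.id ℂ ℓ²(G) := by
  rw [adjoint_twistedShift, ← twistedShift_add, neg_add_cancel, twistedShift_zero]

theorem twistedShift_indicatorVec (g : G) (A : Finset G) :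
    twistedShift χ hχ g (indicatorVec A) = χ g • indicatorVec (A.map (addLeftEmbedding g)) := by
  simp [indicatorVec, twistedShift_single, Finset.smul_sum]

theorem twistedShift_unitIndicator (g : G) (A : Finset G) :
    twistedShift χ hχ g (unitIndicator A) = χ g • unitIndicator (A.map (addLeftEmbedding g)) := by
  rw [unitIndicator, map_smul, twistedShift_indicatorVec, unitIndicator, card_map, smul_comm]

end TwistedShift

section Dilation

variable {κ G : Type*} [DecidableEq κ] [AddGroup G] [DecidableEq G] (χ : AddChar G ℂ)
  (hχ : ∀ g, ‖χ g‖ = 1) {F : κ → Finset G}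

theorem inner_unitIndicator_twistedShift (hdisj : Pairwise (Disjoint on F)) (g : G) {y w : κ}
    (hw : (F y).map (addLeftEmbedding g) ⊆ F w) (z : κ) :
    ⟪unitIndicator (F z), twistedShift χ hχ g (unitIndicator (F y))⟫_ℂ =
      if z = w then χ g * ((√(#(F y) : ℝ) / √(#(F w) : ℝ) : ℝ) : ℂ) else 0 := by
  rw [twistedShift_unitIndicator, inner_smul_right, inner_unitIndicator]
  split_ifs with hz
  · subst hz
    rw [inter_eq_right.2 hw, card_map, mul_comm (√_), ← div_div, Real.div_sqrt]
  · rw [disjoint_iff_inter_eq_empty.1 ((hdisj hz).mono_right hw)]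
    simp

variable (hne : ∀ y, (F y).Nonempty) (hdisj : Pairwise (Disjoint on F))

theorem adjoint_indicatorIsometry_twistedShift_single (g : G) {y w : κ}
    (hw : (F y).map (addLeftEmbedding g) ⊆ F w) :
    ContinuousLinearMap.adjoint (indicatorIsometry hne hdisj)
        (twistedShift χ hχ g (indicatorIsometry hne hdisj (lp.single 2 y 1))) =
      (χ g * ((√(#(F y) : ℝ) / √(#(F w) : ℝ) : ℝ) : ℂ)) • lp.single 2 w 1 := by
  ext z
  rw [indicatorIsometry, adjoint_orthonormalIsometry_apply,
    LinearIsometry.coe_toContinuousLinearMap, orthonormalIsometry_single, one_smul,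
    inner_unitIndicator_twistedShift χ hχ hdisj g hw]
  simp [Pi.single_apply]

end Dilation

section FiberDifferences

variable {ι Y : Type*} [DecidableEq ι] (f : ι → Y)

/-- The space `H₀` of the paper is `fiberDiffSpace (fun s => σ_s x)`. -/
def fiberDiffSpace : Submodule ℂ ℓ²(ι) :=
  (Submodule.span ℂ {v : ℓ²(ι) | ∃ s t : ι, f s = f t ∧
    v = lp.single 2 s (1 : ℂ) - lp.single 2 t (1 : ℂ)}).topologicalClosure

variable {f} {u : ι} {C : Finset ι} {q : ℓ²(ι)}

theorem indicatorVec_mem_orthogonal_fiberDiffSpace (hC : ∀ t, t ∈ C ↔ f t = f u) :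
    indicatorVec C ∈ (fiberDiffSpace f)ᗮ := by
  rw [fiberDiffSpace, Submodule.orthogonal_closure, ← Submodule.span_singleton_le_iff_mem,
    ← Submodule.isOrtho_iff_le, Submodule.isOrtho_span]
  rintro _ rfl _ ⟨s, t, hst, rfl⟩
  have hiff : s ∈ C ↔ t ∈ C := by rw [hC, hC, hst]
  simp [inner_indicatorVec_left, hiff]

theorem single_sub_fiberMean_mem_fiberDiffSpace (hC : ∀ t, t ∈ C ↔ f t = f u) :
    lp.single 2 u 1 - (#C : ℂ)⁻¹ • indicatorVec C ∈ fiberDiffSpace f := by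
  have hcard : (#C : ℂ) ≠ 0 := by
    exact_mod_cast (Finset.card_pos.2 ⟨u, (hC u).2 rfl⟩).ne'
  have : lp.single 2 u 1 - (#C : ℂ)⁻¹ • indicatorVec C =
      (#C : ℂ)⁻¹ • ∑ t ∈ C, (lp.single 2 u (1 : ℂ) - lp.single 2 t 1) := by
    rw [Finset.sum_sub_distrib, Finset.sum_const, smul_sub, ← Nat.cast_smul_eq_nsmul ℂ,
      smul_smul, inv_mul_cancel₀ hcard, one_smul, indicatorVec]
  rw [this]
  refine Submodule.smul_mem _ _ (Submodule.sum_mem _ fun t ht =>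
    Submodule.le_topologicalClosure _ (Submodule.subset_span ?_))
  exact ⟨u, t, ((hC t).1 ht).symm, rfl⟩

theorem single_sub_proj_eq_fiberMean (hC : ∀ t, t ∈ C ↔ f t = f u) (hq : q ∈ fiberDiffSpace f)
    (hq' : ∀ v ∈ fiberDiffSpace f, ⟪lp.single 2 u 1 - q, v⟫_ℂ = 0) :
    lp.single 2 u 1 - q = (#C : ℂ)⁻¹ • indicatorVec C := by
  have hmem : lp.single 2 u 1 - q - (#C : ℂ)⁻¹ • indicatorVec C ∈ fiberDiffSpace f := by
    rw [sub_right_comm]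
    exact sub_mem (single_sub_fiberMean_mem_fiberDiffSpace hC) hq
  have hmem_orth : lp.single 2 u 1 - q - (#C : ℂ)⁻¹ • indicatorVec C ∈ (fiberDiffSpace f)ᗮ :=
    sub_mem ((Submodule.mem_orthogonal' _ _).2 hq')
      (Submodule.smul_mem _ _ (indicatorVec_mem_orthogonal_fiberDiffSpace hC))
  exact sub_eq_zero.1 ((fiberDiffSpace f).orthogonal_disjoint.le_bot ⟨hmem, hmem_orth⟩)

theorem norm_single_sub_proj (hC : ∀ t, t ∈ C ↔ f t = f u) (hq : q ∈ fiberDiffSpace f)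
    (hq' : ∀ v ∈ fiberDiffSpace f, ⟪lp.single 2 u 1 - q, v⟫_ℂ = 0) :
    ‖lp.single 2 u 1 - q‖ = (√(#C : ℝ))⁻¹ := by
  rw [single_sub_proj_eq_fiberMean hC hq hq', norm_smul, norm_indicatorVec, norm_inv,
    Complex.norm_natCast, inv_mul_eq_div, ← inv_div, Real.div_sqrt]

end FiberDifferences

section OrbitFibers

variable {S X : Type*} (σ : S → X → X) (x : X) (hfin : ∀ y, {s | σ s x = y}.Finite)

def orbitFiber (y : X) : Finset S := (hfin y).toFinset

variable {σ x hfin}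

@[simp]
theorem mem_orbitFiber {s : S} {y : X} : s ∈ orbitFiber σ x hfin y ↔ σ s x = y :=
  (hfin y).mem_toFinset

theorem orbitFiber_nonempty (s : S) : (orbitFiber σ x hfin (σ s x)).Nonempty :=
  ⟨s, mem_orbitFiber.2 rfl⟩

theorem pairwise_disjoint_map_orbitFiber {G : Type*} (i : S ↪ G) :
    Pairwise (Disjoint on fun y => (orbitFiber σ x hfin y).map i) := fun _ _ hyz =>
  (disjoint_map i).2 <| disjoint_left.2 fun _ hy hz =>
    hyz ((mem_orbitFiber.1 hy).symm.trans (mem_orbitFiber.1 hz))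

theorem map_addLeft_map_orbitFiber_subset [Add S] {G : Type*} [AddGroup G] (i : S ↪ G)
    (hi : ∀ s t, i (s + t) = i s + i t) (hσ : ∀ s t, σ (s + t) x = σ s (σ t x)) (s : S) (y : X) :
    ((orbitFiber σ x hfin y).map i).map (addLeftEmbedding (i s)) ⊆
      (orbitFiber σ x hfin (σ s y)).map i := by
  simp only [map_map, subset_iff, mem_map, mem_orbitFiber]
  rintro _ ⟨t, rfl, rfl⟩
  exact ⟨s + t, hσ s t, by simp [hi]⟩

end OrbitFibers

theorem exists_addChar_extension {S G : Type*} [AddCommMonoid S] [AddCommGroup G]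
    (i : S →+ G) (hi : Injective i) (hgen : ∀ g : G, ∃ s t : S, g = i s - i t)
    (γ : AddChar S ℂ) (hγ : ∀ s, ‖γ s‖ = 1) :
    ∃ χ : AddChar G ℂ, (∀ g, ‖χ g‖ = 1) ∧ ∀ s, χ (i s) = γ s := by
  have hγ0 : ∀ s, γ s ≠ 0 := fun s => norm_ne_zero_iff.1 (by rw [hγ]; exact one_ne_zero)
  have hwd : ∀ {s t s' t' : S}, i s - i t = i s' - i t' → γ s / γ t = γ s' / γ t' := by
    intro s t s' t' h
    rw [sub_eq_sub_iff_add_eq_add, ← map_add, ← map_add] at h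
    rw [div_eq_div_iff (hγ0 t) (hγ0 t'), ← AddChar.map_add_eq_mul, ← AddChar.map_add_eq_mul,
      hi h]
  choose s t hst using hgen
  have hχ : ∀ {g a b}, g = i a - i b → γ (s g) / γ (t g) = γ a / γ b :=
    fun h => hwd ((hst _).symm.trans h)
  refine ⟨{ toFun := fun g => γ (s g) / γ (t g)
            map_zero_eq_one' := ?_
            map_add_eq_mul' := fun g h => ?_ }, fun g => ?_, fun a => ?_⟩
  · simp [hχ (a := 0) (b := 0) (sub_self _).symm]
  · rw [hχ (a := s g + s h) (b := t g + t h)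
        (by rw [map_add, map_add, add_sub_add_comm, ← hst, ← hst]),
      AddChar.map_add_eq_mul, AddChar.map_add_eq_mul, mul_div_mul_comm]
  · simp [hγ]
  · simp [hχ (g := i a) (a := a) (b := 0) (by simp)]

end OrbitDilation

end

open OrbitDilation

theorem orbit_contractions_dilate_to_unitaries_general
    {S : Type} [AddCancelCommMonoid S] [DecidableEq S]
    {X : Type} [MetricSpace X] [DecidableEq X]
    (σ : S → C(X, X))
    (hσadd : ∀ s t : S, σ (s + t) = (σ s).comp (σ t))
    -- the enveloping group G = S - S
    {G : Type} [AddCommGroup G]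
    (i : S → G) (hi0 : i 0 = 0) (hiadd : ∀ s t : S, i (s + t) = i s + i t)
    (hiinj : Function.Injective i)
    (hgen : ∀ g : G, ∃ s t : S, g = i s - i t)
    (x : X)
    -- the map s ↦ σ_s(x) is finite-to-one
    (hfin : ∀ y : X, {s : S | (σ s) x = y}.Finite)
    -- a character of S
    (γ : S → ℂ)
    (hγ0 : γ 0 = 1) (hγadd : ∀ s t : S, γ (s + t) = γ s * γ t)
    (hγabs : ∀ s : S, ‖γ s‖ = 1)
    -- the action of S on the orbit S(x)
    (στ : S → {y : X // ∃ s : S, (σ s) x = y} → {y : X // ∃ s : S, (σ s) x = y})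
    (hστ : ∀ (t : S) (y : {y : X // ∃ s : S, (σ s) x = y}), (στ t y : X) = (σ t) (y : X))
    -- Q is the orthogonal projection of ℓ²(S) onto H₀
    (Q : lp (fun _ : S => ℂ) 2 →L[ℂ] lp (fun _ : S => ℂ) 2)
    (hQmem : ∀ η : lp (fun _ : S => ℂ) 2,
      Q η ∈ (Submodule.span ℂ {v : lp (fun _ : S => ℂ) 2 | ∃ s t : S,
        (σ s) x = (σ t) x ∧ v = lp.single 2 s (1 : ℂ) - lp.single 2 t (1 : ℂ)}).topologicalClosure)
    (hQorth : ∀ (η : lp (fun _ : S => ℂ) 2),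
      ∀ v ∈ (Submodule.span ℂ {v : lp (fun _ : S => ℂ) 2 | ∃ s t : S,
        (σ s) x = (σ t) x ∧ v = lp.single 2 s (1 : ℂ) - lp.single 2 t (1 : ℂ)}).topologicalClosure,
      inner ℂ (η - Q η) v = (0 : ℂ))
    -- the left regular orbit cocycle
    (μx : S → {y : X // ∃ s : S, (σ s) x = y} → ℝ)
    (hμx : ∀ t u : S,
      μx t ⟨(σ u) x, ⟨u, rfl⟩⟩ =
        ‖lp.single 2 (t + u) (1 : ℂ) - Q (lp.single 2 (t + u) (1 : ℂ))‖ /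
          ‖lp.single 2 u (1 : ℂ) - Q (lp.single 2 u (1 : ℂ))‖)
    -- the contractions ρ_{x,γμ_x}(S_t)
    (ρS : S →
      (lp (fun _ : {y : X // ∃ s : S, (σ s) x = y} => ℂ) 2 →L[ℂ]
        lp (fun _ : {y : X // ∃ s : S, (σ s) x = y} => ℂ) 2))
    (hρS : ∀ (t : S) (y : {y : X // ∃ s : S, (σ s) x = y}),
      ρS t (lp.single 2 y (1 : ℂ)) = (γ t * (μx t y : ℂ)) • lp.single 2 (στ t y) (1 : ℂ)) :
    ∃ (K : Type) (_ : NormedAddCommGroup K) (_ : InnerProductSpace ℂ K),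
      ∃ (_ : CompleteSpace K)
        (V : lp (fun _ : {y : X // ∃ s : S, (σ s) x = y} => ℂ) 2 →L[ℂ] K)
        (U : G → (K →L[ℂ] K)),
        -- V is a linear isometry
        (∀ η, ‖V η‖ = ‖η‖) ∧
        -- U is a group homomorphism of G into the unitary group of K
        U 0 = ContinuousLinearMap.id ℂ K ∧
        (∀ g h : G, U (g + h) = (U g).comp (U h)) ∧
        (∀ g : G, (U g).comp (ContinuousLinearMap.adjoint (U g)) =
          ContinuousLinearMap.id ℂ K) ∧
        (∀ g : G, (ContinuousLinearMap.adjoint (U g)).comp (U g) =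
          ContinuousLinearMap.id ℂ K) ∧
        -- ρ(S_s) = V* U(i s) V
        (∀ s : S, ρS s = (ContinuousLinearMap.adjoint V).comp ((U (i s)).comp V)) := by
  classical
  obtain ⟨χ, hχ, hχi⟩ : ∃ χ : AddChar G ℂ, (∀ g, ‖χ g‖ = 1) ∧ ∀ s, χ (i s) = γ s :=
    exists_addChar_extension ⟨⟨i, hi0⟩, hiadd⟩ hiinj hgen ⟨γ, hγ0, hγadd⟩ hγabs
  have hσx : ∀ s t, σ (s + t) x = σ s (σ t x) := fun s t => by rw [hσadd]; rfl
  have hμ : ∀ s y, μx s y = √(#(orbitFiber (σ ·) x hfin y) : ℝ) /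
      √(#(orbitFiber (σ ·) x hfin (σ s y)) : ℝ) := by
    rintro s ⟨_, u, rfl⟩
    rw [hμx, norm_single_sub_proj (f := fun s => σ s x) (u := s + u)
        (C := orbitFiber (σ ·) x hfin (σ s (σ u x))) (fun t => by rw [mem_orbitFiber, hσx])
        (hQmem _) (hQorth _),
      norm_single_sub_proj (f := fun s => σ s x) (u := u) (fun t => mem_orbitFiber)
        (hQmem _) (hQorth _), inv_div_inv]
  set F := fun y : {y : X // ∃ s : S, (σ s) x = y} =>
    (orbitFiber (σ ·) x hfin y).map ⟨i, hiinj⟩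
  have hne : ∀ y, (F y).Nonempty := fun ⟨_, s, hs⟩ => hs ▸ (orbitFiber_nonempty s).map
  have hdisj : Pairwise (Disjoint on F) :=
    (pairwise_disjoint_map_orbitFiber _).comp_of_injective Subtype.val_injective
  have htrans : ∀ s y, (F y).map (addLeftEmbedding (i s)) ⊆ F (στ s y) := fun s y => by
    have h := map_addLeft_map_orbitFiber_subset (hfin := hfin) ⟨i, hiinj⟩ hiadd hσx s y
    rwa [← hστ] at h
  refine ⟨lp (fun _ : G => ℂ) 2, inferInstance, inferInstance, inferInstance,
    indicatorIsometry hne hdisj, twistedShift χ hχ, norm_indicatorIsometry hne hdisj,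
    twistedShift_zero χ hχ, twistedShift_add χ hχ, twistedShift_comp_adjoint χ hχ,
    adjoint_comp_twistedShift χ hχ, fun s => clm_ext_single fun y => ?_⟩
  rw [hρS, ContinuousLinearMap.comp_apply, ContinuousLinearMap.comp_apply,
    adjoint_indicatorIsometry_twistedShift_single χ hχ hne hdisj (i s) (htrans s y), hχi, hμ,
    card_map, card_map, hστ]

/-- the commuting contractions `ρ_{x,γμ_x}(S_s)` dilate to a commuting
group of unitaries indexed by the enveloping group `G`: `ρ(S_s) = V* U(i s) V`. -/
theorem orbit_contractions_dilate_to_unitaries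
    {S : Type} [AddCancelCommMonoid S] [Countable S] [DecidableEq S]
    {X : Type} [MetricSpace X] [CompactSpace X] [Nonempty X] [DecidableEq X]
    (σ : S → C(X, X))
    (hσ0 : σ 0 = ContinuousMap.id X)
    (hσadd : ∀ s t : S, σ (s + t) = (σ s).comp (σ t))
    (hσsurj : ∀ s : S, Function.Surjective (σ s))
    -- the enveloping group G = S - S
    {G : Type} [AddCommGroup G]
    (i : S → G) (hi0 : i 0 = 0) (hiadd : ∀ s t : S, i (s + t) = i s + i t)
    (hiinj : Function.Injective i)
    (hgen : ∀ g : G, ∃ s t : S, g = i s - i t)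
    (x : X)
    -- the map s ↦ σ_s(x) is finite-to-one
    (hfin : ∀ y : X, {s : S | (σ s) x = y}.Finite)
    -- a character of S
    (γ : S → ℂ)
    (hγ0 : γ 0 = 1) (hγadd : ∀ s t : S, γ (s + t) = γ s * γ t)
    (hγabs : ∀ s : S, ‖γ s‖ = 1)
    -- the action of S on the orbit S(x)
    (στ : S → {y : X // ∃ s : S, (σ s) x = y} → {y : X // ∃ s : S, (σ s) x = y})
    (hστ : ∀ (t : S) (y : {y : X // ∃ s : S, (σ s) x = y}), (στ t y : X) = (σ t) (y : X))
    -- Q is the orthogonal projection of ℓ²(S) onto H₀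
    (Q : lp (fun _ : S => ℂ) 2 →L[ℂ] lp (fun _ : S => ℂ) 2)
    (hQmem : ∀ η : lp (fun _ : S => ℂ) 2,
      Q η ∈ (Submodule.span ℂ {v : lp (fun _ : S => ℂ) 2 | ∃ s t : S,
        (σ s) x = (σ t) x ∧ v = lp.single 2 s (1 : ℂ) - lp.single 2 t (1 : ℂ)}).topologicalClosure)
    (hQfix : ∀ η ∈ (Submodule.span ℂ {v : lp (fun _ : S => ℂ) 2 | ∃ s t : S,
        (σ s) x = (σ t) x ∧ v = lp.single 2 s (1 : ℂ) - lp.single 2 t (1 : ℂ)}).topologicalClosure,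
      Q η = η)
    (hQorth : ∀ (η : lp (fun _ : S => ℂ) 2),
      ∀ v ∈ (Submodule.span ℂ {v : lp (fun _ : S => ℂ) 2 | ∃ s t : S,
        (σ s) x = (σ t) x ∧ v = lp.single 2 s (1 : ℂ) - lp.single 2 t (1 : ℂ)}).topologicalClosure,
      inner ℂ (η - Q η) v = (0 : ℂ))
    -- the left regular orbit cocycle
    (μx : S → {y : X // ∃ s : S, (σ s) x = y} → ℝ)
    (hμx : ∀ t u : S,
      μx t ⟨(σ u) x, ⟨u, rfl⟩⟩ =
        ‖lp.single 2 (t + u) (1 : ℂ) - Q (lp.single 2 (t + u) (1 : ℂ))‖ /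
          ‖lp.single 2 u (1 : ℂ) - Q (lp.single 2 u (1 : ℂ))‖)
    -- the contractions ρ_{x,γμ_x}(S_t)
    (ρS : S →
      (lp (fun _ : {y : X // ∃ s : S, (σ s) x = y} => ℂ) 2 →L[ℂ]
        lp (fun _ : {y : X // ∃ s : S, (σ s) x = y} => ℂ) 2))
    (hρS : ∀ (t : S) (y : {y : X // ∃ s : S, (σ s) x = y}),
      ρS t (lp.single 2 y (1 : ℂ)) = (γ t * (μx t y : ℂ)) • lp.single 2 (στ t y) (1 : ℂ)) :
    ∃ (K : Type) (_ : NormedAddCommGroup K) (_ : InnerProductSpace ℂ K),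
      ∃ (_ : CompleteSpace K)
        (V : lp (fun _ : {y : X // ∃ s : S, (σ s) x = y} => ℂ) 2 →L[ℂ] K)
        (U : G → (K →L[ℂ] K)),
        -- V is a linear isometry
        (∀ η, ‖V η‖ = ‖η‖) ∧
        -- U is a group homomorphism of G into the unitary group of K
        U 0 = ContinuousLinearMap.id ℂ K ∧
        (∀ g h : G, U (g + h) = (U g).comp (U h)) ∧
        (∀ g : G, (U g).comp (ContinuousLinearMap.adjoint (U g)) =
          ContinuousLinearMap.id ℂ K) ∧
        (∀ g : G, (ContinuousLinearMap.adjoint (U g)).comp (U g) =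
          ContinuousLinearMap.id ℂ K) ∧
        -- ρ(S_s) = V* U(i s) V
        (∀ s : S, ρS s = (ContinuousLinearMap.adjoint V).comp ((U (i s)).comp V)) :=
  orbit_contractions_dilate_to_unitaries_general σ hσadd i hi0 hiadd hiinj hgen x hfin γ hγ0 hγadd
    hγabs στ hστ Q hQmem hQorth μx hμx ρS hρS
end

section
/- For every x ∈ X and every character γ of S, the left regular representation π_{x,γ} extends to a covariant representation of the group system (C(X̃), G): there exist a complex Hilbert space K, a linear isometry V : ℓ²(S) → K, a unital *-homomorphism Φ from C(X̃) into the bounded operators on K, and a group homomorphism U from G into the unitary group of K such that (i) Φ(F) U(g) = U(g) Φ(F ∘ σ̃_g) for all F ∈ C(X̃) and g ∈ G; (ii) U(i(s)) ∘ V = V ∘ π_{x,γ}(S_s) for all s ∈ S; and (iii) Φ(f ∘ p) ∘ V = V ∘ π_{x,γ}(f) for all f ∈ C(X). In particular, the range of V is invariant under every U(i(s)) and every Φ(f ∘ p), so π_{x,γ} is the restriction of this covariant representation to a subspace (π_{x,γ} is a Shilov representation). -/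
/-!
Since the `σ_s` are continuous surjections of a compact space, a compactness argument gives a
point `z ∈ X̃` with `z_0 = x`, and `γ` extends to a character `χ` of `G = S - S`. On `ℓ²(G)`, let
`C(X̃)` act by multiplication along the orbit `g ↦ σ̃_g z` and let `G` act by the translations
twisted by `χ`; these form a covariant pair. Extension by zero along `i` embeds `ℓ²(S)`
isometrically into `ℓ²(G)` and intertwines `π_{x,γ}` with this pair, because `σ̃_{i(s)} z` lies
over `σ_s x`.
-/

open Function
open scoped ENNReal lp

noncomputable section

structure IsEnvelopingGroup {S G : Type*} [AddCommMonoid S] [AddCommGroup G] (i : S → G) :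
    Prop where
  map_add : ∀ s t, i (s + t) = i s + i t
  injective : Injective i
  exists_sub : ∀ g, ∃ s t, g = i s - i t

namespace IsEnvelopingGroup

variable {S G : Type*} [AddCommMonoid S] [AddCommGroup G] {i : S → G}

theorem map_zero (hi : IsEnvelopingGroup i) : i 0 = 0 := by
  simpa using hi.map_add 0 0

theorem add_eq_add_of_sub_eq_sub (hi : IsEnvelopingGroup i) {s t s' t' : S}
    (h : i s - i t = i s' - i t') : s + t' = s' + t :=
  hi.injective <| by rw [hi.map_add, hi.map_add]; exact sub_eq_sub_iff_add_eq_add.mp h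

theorem exists_lift (hi : IsEnvelopingGroup i) {α : Type*} (f : S → S → α)
    (hf : ∀ s t s' t', s + t' = s' + t → f s t = f s' t') :
    ∃ F : G → α, ∀ s t, F (i s - i t) = f s t := by
  choose s t hst using hi.exists_sub
  exact ⟨fun g => f (s g) (t g), fun a b =>
    hf _ _ _ _ (hi.add_eq_add_of_sub_eq_sub (hst _).symm)⟩

theorem exists_addChar_extension (hi : IsEnvelopingGroup i) {M : Type*} [CommGroup M]
    (φ : AddChar S M) : ∃ ψ : AddChar G M, ∀ s, ψ (i s) = φ s := by
  obtain ⟨ψ, hψ⟩ := hi.exists_lift (fun s t => φ s / φ t) fun s t s' t' h => by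
    rw [div_eq_div_iff_mul_eq_mul, ← AddChar.map_add_eq_mul, ← AddChar.map_add_eq_mul, h]
  refine ⟨⟨ψ, ?_, fun g h => ?_⟩, fun s => ?_⟩
  · rw [← sub_self (i 0), hψ, div_self']
  · obtain ⟨a, b, rfl⟩ := hi.exists_sub g
    obtain ⟨c, d, rfl⟩ := hi.exists_sub h
    have hsum : i a - i b + (i c - i d) = i (a + c) - i (b + d) := by
      rw [hi.map_add, hi.map_add]; abel
    rw [hsum, hψ, hψ, hψ, AddChar.map_add_eq_mul, AddChar.map_add_eq_mul, div_mul_div_comm]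
  · show ψ (i s) = φ s
    rw [← sub_zero (i s), ← hi.map_zero, hψ, AddChar.map_zero_eq_one, div_one]

end IsEnvelopingGroup

theorem isCompact_canonicalExt {S X G : Type} [TopologicalSpace X] [CompactSpace X] [T2Space X]
    [Add G] (σ : S → C(X, X)) (i : S → G) : IsCompact (canonicalExt σ i) := by
  refine IsClosed.isCompact ?_
  simp only [canonicalExt, Set.ofPred_forall]
  exact isClosed_iInter fun g => isClosed_iInter fun h => isClosed_iInter fun u =>
    isClosed_iInter fun _ =>
      isClosed_eq (continuous_apply h) ((σ u).continuous.comp (continuous_apply g))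

section threads

variable {S X : Type*} [AddCancelCommMonoid S] [TopologicalSpace X] (σ : S → C(X, X)) (x : X)

-- Push a preimage `y` of `x` under `σ w` forward: `τ t = σ r y` whenever `t + r = w`.
theorem exists_thread_of_add_eq (hσadd : ∀ s t, σ (s + t) = (σ s).comp (σ t))
    (hσsurj : ∀ s, Surjective (σ s)) (w : S) :
    ∃ τ : S → X, τ 0 = x ∧ ∀ s u r, s + u + r = w → τ s = σ u (τ (s + u)) := by
  classical
  obtain ⟨y, hy⟩ := hσsurj w x
  let τ : S → X := fun t => if h : ∃ r, t + r = w then σ h.choose y else x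
  have hτ : ∀ t r, t + r = w → τ t = σ r y := fun t r htr => by
    have h : ∃ r, t + r = w := ⟨r, htr⟩
    simp only [τ, dif_pos h, add_left_cancel (h.choose_spec.trans htr.symm)]
  refine ⟨τ, by rw [hτ 0 w (zero_add w), hy], fun s u r h => ?_⟩
  rw [hτ s (u + r) (by rw [← add_assoc, h]), hτ (s + u) r h, hσadd, ContinuousMap.comp_apply]

theorem exists_thread [CompactSpace X] [T2Space X]
    (hσadd : ∀ s t, σ (s + t) = (σ s).comp (σ t)) (hσsurj : ∀ s, Surjective (σ s)) :
    ∃ τ : S → X, τ 0 = x ∧ ∀ s u, τ s = σ u (τ (s + u)) := by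
  let C : S → Set (S → X) := fun w =>
    {τ | τ 0 = x ∧ ∀ s u r, s + u + r = w → τ s = σ u (τ (s + u))}
  have hC : ∀ w, IsClosed (C w) := fun w => by
    simp only [C, Set.ofPred_and, Set.ofPred_forall]
    exact (isClosed_eq (continuous_apply 0) continuous_const).inter <|
      isClosed_iInter fun s => isClosed_iInter fun u => isClosed_iInter fun _ =>
        isClosed_iInter fun _ =>
          isClosed_eq (continuous_apply s) ((σ u).continuous.comp (continuous_apply _))
  have hdir : Directed (· ⊇ ·) C := fun w w' =>
    ⟨w + w', fun τ hτ => ⟨hτ.1, fun s u r h => hτ.2 s u (r + w') (by rw [← add_assoc, h])⟩,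
      fun τ hτ => ⟨hτ.1, fun s u r h => hτ.2 s u (r + w) (by rw [← add_assoc, h, add_comm])⟩⟩
  obtain ⟨τ, hτ⟩ := IsCompact.nonempty_iInter_of_directed_nonempty_isCompact_isClosed C hdir
    (exists_thread_of_add_eq σ x hσadd hσsurj) (fun w => (hC w).isCompact) hC
  exact ⟨τ, (Set.mem_iInter.1 hτ 0).1,
    fun s u => (Set.mem_iInter.1 hτ (s + u)).2 s u 0 (add_zero _)⟩

end threads

theorem exists_canonicalExt_apply_zero_eq {S X G : Type} [AddCancelCommMonoid S]
    [TopologicalSpace X] [CompactSpace X] [T2Space X] [AddCommGroup G] (σ : S → C(X, X))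
    (hσ0 : σ 0 = ContinuousMap.id X) (hσadd : ∀ s t, σ (s + t) = (σ s).comp (σ t))
    (hσsurj : ∀ s, Surjective (σ s)) {i : S → G} (hi : IsEnvelopingGroup i) (x : X) :
    ∃ z : canonicalExt σ i, (z : G → X) 0 = x := by
  obtain ⟨τ, hτ0, hτ⟩ := exists_thread σ x hσadd hσsurj
  have hσcomm : ∀ s t y, σ s (σ t y) = σ t (σ s y) := fun s t y => by
    rw [← ContinuousMap.comp_apply, ← hσadd, add_comm, hσadd, ContinuousMap.comp_apply]
  have hshift : ∀ s t u, σ t (τ s) = σ (t + u) (τ (s + u)) := fun s t u => by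
    rw [hτ s u, hσadd, ContinuousMap.comp_apply]
  obtain ⟨z, hz⟩ := hi.exists_lift (fun s t => σ t (τ s)) fun s t s' t' h => by
    rw [hshift s t t', hshift s' t' t, h, add_comm t]
  refine ⟨⟨z, fun g h u hg => ?_⟩, ?_⟩
  · obtain ⟨s, t, rfl⟩ := hi.exists_sub h
    rw [show g = i (s + u) - i t by rw [hg, hi.map_add]; abel, hz, hz, hτ s u, hσcomm]
  · show z 0 = x
    rw [← sub_self (i 0), hz, hτ0, hσ0, ContinuousMap.id_apply]

namespace lp

section extension

variable {ι κ 𝕜 E : Type*} [NormedField 𝕜] [NormedAddCommGroup E] [NormedSpace 𝕜 E]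
  {p : ℝ≥0∞} [Fact (1 ≤ p)] {j : ι → κ}

theorem norm_rpow_comp_extend_zero (hp : p ≠ ∞) (f : ι → E) :
    (fun k => ‖extend j f 0 k‖ ^ p.toReal) = extend j (fun a => ‖f a‖ ^ p.toReal) 0 := by
  funext k
  rw [apply_extend (fun v : E => ‖v‖ ^ p.toReal)]
  congr 1
  funext k
  simp [Real.zero_rpow ((ENNReal.toReal_pos_iff_ne_top p).2 hp).ne']

theorem memℓp_extend_zero (hj : Injective j) (hp : p ≠ ∞) (f : lp (fun _ : ι => E) p) :
    Memℓp (extend j ⇑f 0) p := by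
  refine memℓp_gen ?_
  rw [norm_rpow_comp_extend_zero hp, summable_extend_zero hj]
  exact (lp.memℓp f).summable ((ENNReal.toReal_pos_iff_ne_top p).2 hp)

variable (𝕜 E) in
def extendByZero (hj : Injective j) (hp : p ≠ ∞) :
    lp (fun _ : ι => E) p →ₗᵢ[𝕜] lp (fun _ : κ => E) p where
  toFun f := ⟨extend j ⇑f 0, memℓp_extend_zero hj hp f⟩
  map_add' f g := by
    ext1
    simp only [coeFn_add]
    rw [← extend_add, add_zero]
  map_smul' c f := by
    ext1
    simp only [coeFn_smul]
    rw [← extend_smul, smul_zero]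
    rfl
  norm_map' f := by
    have hp' := (ENNReal.toReal_pos_iff_ne_top p).2 hp
    rw [norm_eq_tsum_rpow hp', norm_eq_tsum_rpow hp']
    simp only [AddHom.coe_mk, LinearMap.coe_mk]
    rw [norm_rpow_comp_extend_zero hp, tsum_extend_zero hj]

theorem extendByZero_apply_apply (hj : Injective j) (hp : p ≠ ∞) (f : lp (fun _ : ι => E) p)
    (a : ι) : extendByZero 𝕜 E hj hp f (j a) = f a :=
  hj.extend_apply _ _ _

theorem extendByZero_apply_of_notMem_range (hj : Injective j) (hp : p ≠ ∞)
    (f : lp (fun _ : ι => E) p) {k : κ} (hk : k ∉ Set.range j) :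
    extendByZero 𝕜 E hj hp f k = 0 :=
  extend_apply' _ _ _ (by simpa using hk)

theorem extendByZero_single [DecidableEq ι] [DecidableEq κ] (hj : Injective j) (hp : p ≠ ∞)
    (a : ι) (x : E) : extendByZero 𝕜 E hj hp (lp.single p a x) = lp.single p (j a) x := by
  ext k
  by_cases hk : k ∈ Set.range j
  · obtain ⟨b, rfl⟩ := hk
    rw [extendByZero_apply_apply]
    by_cases hb : b = a
    · rw [hb, lp.single_apply_self, lp.single_apply_self]
    · rw [lp.single_apply_ne _ _ _ hb, lp.single_apply_ne _ _ _ (hj.ne hb)]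
  · rw [extendByZero_apply_of_notMem_range _ _ _ hk, lp.single_apply_ne]
    rintro rfl
    exact hk ⟨a, rfl⟩

variable (𝕜 E) in
def congrLeft (e : ι ≃ κ) (hp : p ≠ ∞) : lp (fun _ : ι => E) p ≃ₗᵢ[𝕜] lp (fun _ : κ => E) p :=
  LinearIsometryEquiv.ofSurjective (extendByZero 𝕜 E e.injective hp) fun f =>
    ⟨extendByZero 𝕜 E e.symm.injective hp f, by
      ext k
      conv_lhs => rw [← e.apply_symm_apply k]
      rw [extendByZero_apply_apply, extendByZero_apply_apply]⟩

theorem congrLeft_apply_apply (e : ι ≃ κ) (hp : p ≠ ∞) (f : lp (fun _ : ι => E) p) (k : κ) :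
    congrLeft 𝕜 E e hp f k = f (e.symm k) := by
  conv_lhs => rw [← e.apply_symm_apply k]
  exact extendByZero_apply_apply (𝕜 := 𝕜) e.injective hp f _

theorem congrLeft_symm (e : ι ≃ κ) (hp : p ≠ ∞) :
    (congrLeft 𝕜 E e hp).symm = congrLeft 𝕜 E e.symm hp := by
  ext f : 1
  rw [LinearIsometryEquiv.symm_apply_eq]
  ext k
  simp [congrLeft_apply_apply]

theorem continuousLinearMap_ext_single {F : Type*} [NormedAddCommGroup F] [NormedSpace 𝕜 F]
    [DecidableEq ι] (hp : p ≠ ∞) {A B : lp (fun _ : ι => 𝕜) p →L[𝕜] F}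
    (h : ∀ a, A (lp.single p a 1) = B (lp.single p a 1)) : A = B := by
  have hsingle : ∀ a (c : 𝕜), (lp.single p a c : lp (fun _ : ι => 𝕜) p) = c • lp.single p a 1 :=
    fun a c => by rw [← lp.single_smul, smul_eq_mul, mul_one]
  ext f
  have hAB : ∀ a, A (lp.single p a (f a)) = B (lp.single p a (f a)) := fun a => by
    rw [hsingle, map_smul, map_smul, h]
  have hf := lp.hasSum_single hp f
  exact (hf.mapL A).unique (by simpa only [hAB] using hf.mapL B)

end extension

section multiplication

variable {ι κ 𝕜 Y : Type*} [RCLike 𝕜] [TopologicalSpace Y] [CompactSpace Y]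

def multiplicationRep (o : ι → Y) : C(Y, 𝕜) →⋆ₐ[𝕜] (ℓ²(ι, 𝕜) →L[𝕜] ℓ²(ι, 𝕜)) where
  toFun F := mapCLM 2 (fun k => ContinuousLinearMap.mul 𝕜 𝕜 (F (o k))) (norm_nonneg F)
    fun k => (ContinuousLinearMap.opNorm_mul_apply_le 𝕜 𝕜 _).trans (F.norm_coe_le_norm _)
  map_one' := by ext; simp
  map_mul' F₁ F₂ := by ext; simp [mul_assoc]
  map_zero' := by ext; simp
  map_add' F₁ F₂ := by ext; simp
  commutes' c := by ext; simp
  map_star' F := by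
    rw [ContinuousLinearMap.star_eq_adjoint, ContinuousLinearMap.eq_adjoint_iff]
    intro f g
    simp only [inner_eq_tsum]
    refine tsum_congr fun k => ?_
    simp [mul_comm, mul_left_comm]

theorem multiplicationRep_apply_apply (o : ι → Y) (F : C(Y, 𝕜)) (f : ℓ²(ι, 𝕜)) (k : ι) :
    multiplicationRep o F f k = F (o k) * f k :=
  rfl

theorem multiplicationRep_extendByZero {j : ι → κ} (hj : Injective j) (o : κ → Y) (F : C(Y, 𝕜))
    (f : ℓ²(ι, 𝕜)) :
    multiplicationRep o F (extendByZero 𝕜 𝕜 hj ENNReal.ofNat_ne_top f) =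
      extendByZero 𝕜 𝕜 hj ENNReal.ofNat_ne_top (multiplicationRep (o ∘ j) F f) := by
  ext k
  rw [multiplicationRep_apply_apply]
  by_cases hk : k ∈ Set.range j
  · obtain ⟨a, rfl⟩ := hk
    simp only [extendByZero_apply_apply, multiplicationRep_apply_apply, comp_apply]
  · simp only [extendByZero_apply_of_notMem_range _ _ _ hk, mul_zero]

end multiplication

section translation

variable {G : Type*} [AddCommGroup G]

def charTranslation (χ : AddChar G Circle) (g : G) : ℓ²(G, ℂ) →L[ℂ] ℓ²(G, ℂ) :=
  (χ g : ℂ) • (congrLeft ℂ ℂ (p := 2) (Equiv.addLeft g) ENNReal.ofNat_ne_top :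
    ℓ²(G, ℂ) →L[ℂ] ℓ²(G, ℂ))

variable (χ : AddChar G Circle)

theorem charTranslation_apply_apply (g : G) (f : ℓ²(G, ℂ)) (k : G) :
    charTranslation χ g f k = χ g * f (-g + k) := by
  simp [charTranslation, congrLeft_apply_apply]

theorem charTranslation_single [DecidableEq G] (g a : G) (c : ℂ) :
    charTranslation χ g (lp.single 2 a c) = (χ g : ℂ) • lp.single 2 (g + a) c := by
  simp [charTranslation, congrLeft, extendByZero_single]

theorem charTranslation_zero : charTranslation χ 0 = ContinuousLinearMap.id ℂ ℓ²(G, ℂ) := by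
  ext f k
  simp [charTranslation_apply_apply]

theorem charTranslation_add (g h : G) :
    charTranslation χ (g + h) = (charTranslation χ g).comp (charTranslation χ h) := by
  ext f k
  simp only [charTranslation_apply_apply, ContinuousLinearMap.comp_apply, AddChar.map_add_eq_mul,
    Circle.coe_mul, neg_add, add_assoc, mul_assoc, add_left_comm (-g)]

theorem adjoint_charTranslation (g : G) :
    ContinuousLinearMap.adjoint (charTranslation χ g) = charTranslation χ (-g) := by
  rw [charTranslation, charTranslation, map_smulₛₗ, LinearIsometryEquiv.adjoint_eq_symm,
    congrLeft_symm, Equiv.addLeft_symm, ← Circle.coe_inv_eq_conj, AddChar.map_neg_eq_inv]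

theorem charTranslation_comp_adjoint (g : G) :
    (charTranslation χ g).comp (ContinuousLinearMap.adjoint (charTranslation χ g)) =
      ContinuousLinearMap.id ℂ ℓ²(G, ℂ) := by
  rw [adjoint_charTranslation, ← charTranslation_add, add_neg_cancel, charTranslation_zero]

theorem adjoint_comp_charTranslation (g : G) :
    (ContinuousLinearMap.adjoint (charTranslation χ g)).comp (charTranslation χ g) =
      ContinuousLinearMap.id ℂ ℓ²(G, ℂ) := by
  rw [adjoint_charTranslation, ← charTranslation_add, neg_add_cancel, charTranslation_zero]

theorem multiplicationRep_comp_charTranslation {Y : Type*} [TopologicalSpace Y] [CompactSpace Y]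
    (o : G → Y) {τ : C(Y, Y)} (g : G) (ho : ∀ k, o (g + k) = τ (o k)) (F : C(Y, ℂ)) :
    (multiplicationRep o F).comp (charTranslation χ g) =
      (charTranslation χ g).comp (multiplicationRep o (F.comp τ)) := by
  ext f k
  simp only [ContinuousLinearMap.comp_apply, charTranslation_apply_apply,
    multiplicationRep_apply_apply, ContinuousMap.comp_apply, ← ho, add_neg_cancel_left]
  ring

end translation

end lp

end

theorem left_regular_is_shilov_general
    {S : Type} [AddCancelCommMonoid S] [DecidableEq S]
    {X : Type} [MetricSpace X] [CompactSpace X]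
    (σ : S → C(X, X))
    (hσ0 : σ 0 = ContinuousMap.id X)
    (hσadd : ∀ s t : S, σ (s + t) = (σ s).comp (σ t))
    (hσsurj : ∀ s : S, Function.Surjective (σ s))
    -- the enveloping group G = S - S
    {G : Type} [AddCommGroup G]
    (i : S → G) (hiadd : ∀ s t : S, i (s + t) = i s + i t)
    (hiinj : Function.Injective i)
    (hgen : ∀ g : G, ∃ s t : S, g = i s - i t)
    -- the action of G on X̃ by homeomorphisms, extending σ̃ on S
    (σG : G → ((canonicalExt σ i) ≃ₜ (canonicalExt σ i)))
    (hσGhom : ∀ g h : G, σG (g + h) = (σG g).trans (σG h))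
    (hσGS : ∀ (s : S) (z : canonicalExt σ i) (g : G),
      ((σG (i s)) z : G → X) g = (σ s) ((z : G → X) g))
    -- the projection p : X̃ → X as a continuous map
    (pC : C(canonicalExt σ i, X))
    (hpC : ∀ z : canonicalExt σ i, pC z = (z : G → X) 0)
    (x : X) (γ : S → ℂ)
    (hγ0 : γ 0 = 1) (hγadd : ∀ s t : S, γ (s + t) = γ s * γ t)
    (hγabs : ∀ s : S, ‖γ s‖ = 1)
    -- the left regular representation π_{x,γ}
    (πf : C(X, ℂ) → (lp (fun _ : S => ℂ) 2 →L[ℂ] lp (fun _ : S => ℂ) 2))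
    (πS : S → (lp (fun _ : S => ℂ) 2 →L[ℂ] lp (fun _ : S => ℂ) 2))
    (hπf : ∀ (f : C(X, ℂ)) (η : lp (fun _ : S => ℂ) 2) (s : S),
      (πf f η) s = f ((σ s) x) * η s)
    (hπS : ∀ (t s : S), πS t (lp.single 2 s (1 : ℂ)) = γ t • lp.single 2 (t + s) (1 : ℂ)) :
    ∃ (K : Type) (_ : NormedAddCommGroup K) (_ : InnerProductSpace ℂ K)
      (_ : CompleteSpace K)
      (V : lp (fun _ : S => ℂ) 2 →ₗᵢ[ℂ] K)
      (Φ : C(canonicalExt σ i, ℂ) → (K →L[ℂ] K))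
      (U : G → (K →L[ℂ] K)),
      -- Φ is a unital *-homomorphism
      (Φ 1 = ContinuousLinearMap.id ℂ K) ∧
      (∀ F₁ F₂ : C(canonicalExt σ i, ℂ), Φ (F₁ * F₂) = (Φ F₁).comp (Φ F₂)) ∧
      (∀ (c : ℂ) (F₁ F₂ : C(canonicalExt σ i, ℂ)), Φ (c • F₁ + F₂) = c • Φ F₁ + Φ F₂) ∧
      (∀ F : C(canonicalExt σ i, ℂ), Φ (star F) = ContinuousLinearMap.adjoint (Φ F)) ∧
      -- U is a group homomorphism of G into the unitary group of K
      (U 0 = ContinuousLinearMap.id ℂ K) ∧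
      (∀ g h : G, U (g + h) = (U g).comp (U h)) ∧
      (∀ g : G, (U g).comp (ContinuousLinearMap.adjoint (U g)) = ContinuousLinearMap.id ℂ K) ∧
      (∀ g : G, (ContinuousLinearMap.adjoint (U g)).comp (U g) = ContinuousLinearMap.id ℂ K) ∧
      -- (i) the covariance relation for (C(X̃), G)
      (∀ (F : C(canonicalExt σ i, ℂ)) (g : G),
        (Φ F).comp (U g) = (U g).comp (Φ (F.comp (σG g : C(canonicalExt σ i, canonicalExt σ i))))) ∧
      -- (ii) U(i s) restricts to π_{x,γ}(S_s) on the range of V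
      (∀ (s : S) (η : lp (fun _ : S => ℂ) 2), U (i s) (V η) = V (πS s η)) ∧
      -- (iii) Φ(f ∘ p) restricts to π_{x,γ}(f) on the range of V
      (∀ (f : C(X, ℂ)) (η : lp (fun _ : S => ℂ) 2), Φ (f.comp pC) (V η) = V (πf f η)) ∧
      -- in particular the range of V is invariant
      (∀ (s : S) (η : lp (fun _ : S => ℂ) 2), ∃ ζ, U (i s) (V η) = V ζ) ∧
      (∀ (f : C(X, ℂ)) (η : lp (fun _ : S => ℂ) 2), ∃ ζ, Φ (f.comp pC) (V η) = V ζ) := by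
  classical
  have hi : IsEnvelopingGroup i := ⟨hiadd, hiinj, hgen⟩
  have : CompactSpace (canonicalExt σ i) :=
    isCompact_iff_compactSpace.mp (isCompact_canonicalExt σ i)
  obtain ⟨z, hz0⟩ := exists_canonicalExt_apply_zero_eq σ hσ0 hσadd hσsurj hi x
  obtain ⟨χ, hχ⟩ := hi.exists_addChar_extension (M := Circle)
    { toFun := fun s => (⟨γ s, mem_sphere_zero_iff_norm.2 (hγabs s)⟩ : Circle)
      map_zero_eq_one' := Circle.ext hγ0
      map_add_eq_mul' := fun s t => Circle.ext (hγadd s t) }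
  let orbit : G → canonicalExt σ i := fun g => σG g z
  let V := lp.extendByZero ℂ ℂ hiinj (p := 2) ENNReal.ofNat_ne_top
  have hV : ∀ a c, V (lp.single 2 a c) = lp.single 2 (i a) c := lp.extendByZero_single hiinj _
  have hU : ∀ s, (lp.charTranslation χ (i s)).comp V.toContinuousLinearMap =
      V.toContinuousLinearMap.comp (πS s) := fun s =>
    lp.continuousLinearMap_ext_single ENNReal.ofNat_ne_top fun a => by
      show lp.charTranslation χ (i s) (V (lp.single 2 a 1)) = V (πS s (lp.single 2 a 1))
      rw [hπS, map_smul, hV, hV, lp.charTranslation_single, hχ, hiadd]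
      rfl
  have hΦ : ∀ f η, lp.multiplicationRep orbit (f.comp pC) (V η) = V (πf f η) := fun f η => by
    have hπf' : πf f = lp.multiplicationRep (orbit ∘ i) (f.comp pC) := by
      ext η a
      rw [hπf, lp.multiplicationRep_apply_apply, ContinuousMap.comp_apply, comp_apply, hpC, hσGS,
        hz0]
    rw [hπf', lp.multiplicationRep_extendByZero]
  refine ⟨ℓ²(G, ℂ), inferInstance, inferInstance, inferInstance, V, lp.multiplicationRep orbit,
    lp.charTranslation χ, map_one _, map_mul _, fun c F₁ F₂ => by rw [map_add, map_smul],
    fun F => by rw [map_star, ContinuousLinearMap.star_eq_adjoint], lp.charTranslation_zero χ,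
    lp.charTranslation_add χ, lp.charTranslation_comp_adjoint χ, lp.adjoint_comp_charTranslation χ,
    fun F g => lp.multiplicationRep_comp_charTranslation χ orbit g
      (fun k => by simp only [orbit, add_comm g, hσGhom]; rfl) F,
    fun s η => congr($(hU s) η), hΦ, fun s η => ⟨πS s η, congr($(hU s) η)⟩,
    fun f η => ⟨πf f η, hΦ f η⟩⟩

/-- the left regular representation `π_{x,γ}` extends to a covariant
representation of the group system `(C(X̃), G)`; in particular `π_{x,γ}` is Shilov. -/
theorem left_regular_is_shilov
    {S : Type} [AddCancelCommMonoid S] [Countable S] [DecidableEq S]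
    {X : Type} [MetricSpace X] [CompactSpace X] [Nonempty X]
    (σ : S → C(X, X))
    (hσ0 : σ 0 = ContinuousMap.id X)
    (hσadd : ∀ s t : S, σ (s + t) = (σ s).comp (σ t))
    (hσsurj : ∀ s : S, Function.Surjective (σ s))
    -- the enveloping group G = S - S
    {G : Type} [AddCommGroup G]
    (i : S → G) (hi0 : i 0 = 0) (hiadd : ∀ s t : S, i (s + t) = i s + i t)
    (hiinj : Function.Injective i)
    (hgen : ∀ g : G, ∃ s t : S, g = i s - i t)
    -- the action of G on X̃ by homeomorphisms, extending σ̃ on S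
    (σG : G → ((canonicalExt σ i) ≃ₜ (canonicalExt σ i)))
    (hσGhom : ∀ g h : G, σG (g + h) = (σG g).trans (σG h))
    (hσGS : ∀ (s : S) (z : canonicalExt σ i) (g : G),
      ((σG (i s)) z : G → X) g = (σ s) ((z : G → X) g))
    -- the projection p : X̃ → X as a continuous map
    (pC : C(canonicalExt σ i, X))
    (hpC : ∀ z : canonicalExt σ i, pC z = (z : G → X) 0)
    (x : X) (γ : S → ℂ)
    (hγ0 : γ 0 = 1) (hγadd : ∀ s t : S, γ (s + t) = γ s * γ t)
    (hγabs : ∀ s : S, ‖γ s‖ = 1)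
    -- the left regular representation π_{x,γ}
    (πf : C(X, ℂ) → (lp (fun _ : S => ℂ) 2 →L[ℂ] lp (fun _ : S => ℂ) 2))
    (πS : S → (lp (fun _ : S => ℂ) 2 →L[ℂ] lp (fun _ : S => ℂ) 2))
    (hπf : ∀ (f : C(X, ℂ)) (η : lp (fun _ : S => ℂ) 2) (s : S),
      (πf f η) s = f ((σ s) x) * η s)
    (hπS : ∀ (t s : S), πS t (lp.single 2 s (1 : ℂ)) = γ t • lp.single 2 (t + s) (1 : ℂ)) :
    ∃ (K : Type) (_ : NormedAddCommGroup K) (_ : InnerProductSpace ℂ K)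
      (_ : CompleteSpace K)
      (V : lp (fun _ : S => ℂ) 2 →ₗᵢ[ℂ] K)
      (Φ : C(canonicalExt σ i, ℂ) → (K →L[ℂ] K))
      (U : G → (K →L[ℂ] K)),
      -- Φ is a unital *-homomorphism
      (Φ 1 = ContinuousLinearMap.id ℂ K) ∧
      (∀ F₁ F₂ : C(canonicalExt σ i, ℂ), Φ (F₁ * F₂) = (Φ F₁).comp (Φ F₂)) ∧
      (∀ (c : ℂ) (F₁ F₂ : C(canonicalExt σ i, ℂ)), Φ (c • F₁ + F₂) = c • Φ F₁ + Φ F₂) ∧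
      (∀ F : C(canonicalExt σ i, ℂ), Φ (star F) = ContinuousLinearMap.adjoint (Φ F)) ∧
      -- U is a group homomorphism of G into the unitary group of K
      (U 0 = ContinuousLinearMap.id ℂ K) ∧
      (∀ g h : G, U (g + h) = (U g).comp (U h)) ∧
      (∀ g : G, (U g).comp (ContinuousLinearMap.adjoint (U g)) = ContinuousLinearMap.id ℂ K) ∧
      (∀ g : G, (ContinuousLinearMap.adjoint (U g)).comp (U g) = ContinuousLinearMap.id ℂ K) ∧
      -- (i) the covariance relation for (C(X̃), G)
      (∀ (F : C(canonicalExt σ i, ℂ)) (g : G),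
        (Φ F).comp (U g) = (U g).comp (Φ (F.comp (σG g : C(canonicalExt σ i, canonicalExt σ i))))) ∧
      -- (ii) U(i s) restricts to π_{x,γ}(S_s) on the range of V
      (∀ (s : S) (η : lp (fun _ : S => ℂ) 2), U (i s) (V η) = V (πS s η)) ∧
      -- (iii) Φ(f ∘ p) restricts to π_{x,γ}(f) on the range of V
      (∀ (f : C(X, ℂ)) (η : lp (fun _ : S => ℂ) 2), Φ (f.comp pC) (V η) = V (πf f η)) ∧
      -- in particular the range of V is invariant
      (∀ (s : S) (η : lp (fun _ : S => ℂ) 2), ∃ ζ, U (i s) (V η) = V ζ) ∧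
      (∀ (f : C(X, ℂ)) (η : lp (fun _ : S => ℂ) 2), ∃ ζ, Φ (f.comp pC) (V η) = V ζ) :=
  left_regular_is_shilov_general σ hσ0 hσadd hσsurj i hiadd hiinj hgen σG hσGhom hσGS pC hpC x γ hγ0
    hγadd hγabs πf πS hπf hπS
end
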